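/- arXiv:1602.06383 — 3 statements merged into one kernel-verified Lean document; each statement's English description precedes it below -/
import Mathlib

section
/- Let K_1, K_2, … be distribution functions on [-∞,∞]^m and K a uniformly continuous distribution function on [-∞,∞]^m with lim_{i→∞} K_i = K uniformly on [-∞,∞]^m. Let α_{1,n},…,α_{n,n} be weights with α_{i,n} ≥ 0, Σ_{i=1}^n α_{i,n} = 1, lim_{n→∞} √n · max_{1≤i≤n} α_{i,n} = 0 and lim_{n→∞} n Σ_{i=1}^n α_{i,n}² = κ ∈ [1,∞). Then (i) lim_{n→∞} Σ_{i=1}^n α_{i,n} K_i = K uniformly on [-∞,∞]^m, (ii) lim_{n→∞} n Σ_{i=1}^n α_{i,n}² K_i = κK uniformly on [-∞,∞]^m, and (iii) lim_{n→∞} sup_{x,y ∈ [-∞,∞]^m} | n Σ_{i=1}^n α_{i,n}² K_i(x) K_i(y) − κ K(x) K(y) | = 0. -/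
open MeasureTheory ProbabilityTheory Filter Topology
open scoped ENNReal NNReal

noncomputable section

/-- The (multivariate) distribution function of a measure on `ℝ^m`,
evaluated via the coordinatewise (partial) order. -/
def cdfm {m : ℕ} (μ : Measure (Fin m → ℝ)) : (Fin m → ℝ) → ℝ :=
  fun x => (μ {y | y ≤ x}).toReal

/-- `K` is a (multivariate) distribution function. -/
def IsCDF {m : ℕ} (K : (Fin m → ℝ) → ℝ) : Prop :=
  ∃ μ : Measure (Fin m → ℝ), IsProbabilityMeasure μ ∧ K = cdfm μ

/-- The `m`-dimensional standard normal distribution. -/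
def stdGaussian (m : ℕ) : Measure (Fin m → ℝ) :=
  Measure.pi fun _ => gaussianReal 0 1

/-- The metric `ρ(x,y) = ∫ |1(w ≤ x) − 1(w ≤ y)| dΦ(w)`, `Φ` the `m`-dimensional
standard normal distribution function. -/
def rho {m : ℕ} (x y : Fin m → ℝ) : ℝ :=
  ∫ w, |Set.indicator {v : Fin m → ℝ | v ≤ x} (fun _ => (1 : ℝ)) w -
        Set.indicator {v : Fin m → ℝ | v ≤ y} (fun _ => (1 : ℝ)) w| ∂(stdGaussian m)

/-- Standing assumptions on the triangular array of weights:
nonnegativity, row sums one, `√n · max_i α_{i,n} → 0` and `n Σ_i α_{i,n}² → κ ∈ [1,∞)`. -/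
def WeightsOK (α : ℕ → ℕ → ℝ) (κ : ℝ) : Prop :=
  (∀ n, ∀ i ∈ Finset.Icc 1 n, 0 ≤ α n i) ∧
  (∀ n, 1 ≤ n → ∑ i ∈ Finset.Icc 1 n, α n i = 1) ∧
  Tendsto (fun n : ℕ => Real.sqrt n * ⨆ i ∈ Finset.Icc 1 n, α n i) atTop (𝓝 0) ∧
  Tendsto (fun n : ℕ => (n : ℝ) * ∑ i ∈ Finset.Icc 1 n, (α n i) ^ 2) atTop (𝓝 κ) ∧
  1 ≤ κ

/-- Outer expectation `E*(g) = inf { E(h) : h integrable, g ≤ h }`. -/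
def outerExp {Ω : Type*} [MeasurableSpace Ω] (P : Measure Ω) (g : Ω → ℝ) : ℝ :=
  ⨅ h : {h : Ω → ℝ // Integrable h P ∧ ∀ ω, g ω ≤ h ω}, ∫ ω, h.1 ω ∂P

/-- The supremum "distance" on `ℓ∞(T)` (possibly infinite). -/
def supEDist {T : Type*} (f g : T → ℝ) : ℝ≥0∞ :=
  ⨆ t, ENNReal.ofReal |f t - g t|

/-- Continuity with respect to the supremum metric on `ℓ∞(T)`. -/
def SupContinuous {T : Type*} (F : (T → ℝ) → ℝ) : Prop :=
  ∀ f : T → ℝ, ∀ ε > (0 : ℝ), ∃ δ > (0 : ℝ), ∀ g : T → ℝ,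
    supEDist f g < ENNReal.ofReal δ → |F g - F f| < ε

/-- Convergence in distribution in `ℓ∞(T)`: outer expectations of bounded,
sup-metric continuous functions converge. -/
def ConvInDistSup {ι Ω Ω' T : Type*} [MeasurableSpace Ω] [MeasurableSpace Ω']
    (l : Filter ι) (P : Measure Ω) (P' : Measure Ω')
    (W : ι → Ω → T → ℝ) (L : Ω' → T → ℝ) : Prop :=
  ∀ F : (T → ℝ) → ℝ, SupContinuous F → (∃ C, ∀ f, |F f| ≤ C) →
    Tendsto (fun n => outerExp P (fun ω => F (W n ω))) l
      (𝓝 (outerExp P' (fun ω => F (L ω))))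

/-- Convergence in distribution of real-valued statistics (via outer expectations). -/
def ConvInDistR {ι Ω Ω' : Type*} [MeasurableSpace Ω] [MeasurableSpace Ω']
    (l : Filter ι) (P : Measure Ω) (P' : Measure Ω')
    (S : ι → Ω → ℝ) (L : Ω' → ℝ) : Prop :=
  ∀ F : ℝ → ℝ, Continuous F → (∃ C, ∀ x, |F x| ≤ C) →
    Tendsto (fun n => outerExp P (fun ω => F (S n ω))) l
      (𝓝 (outerExp P' (fun ω => F (L ω))))

/-- A process all of whose finite-dimensional linear functionals are Gaussian. -/
def IsGaussianProcess {Ω T : Type*} [MeasurableSpace Ω] (P : Measure Ω)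
    (U : Ω → T → ℝ) : Prop :=
  ∀ (p : ℕ) (t : Fin p → T) (a : Fin p → ℝ),
    ∃ (μ : ℝ) (v : ℝ≥0),
      Measure.map (fun ω => ∑ j, a j * U ω (t j)) P = gaussianReal μ v

/-- A mean-zero Gaussian process with covariance function `c` whose sample paths are
a.s. uniformly continuous w.r.t. the pseudometric `d`. -/
def IsGaussianLimit {Ω : Type*} {T : Type*} [MeasurableSpace Ω] (P : Measure Ω)
    (U : Ω → T → ℝ) (c : T → T → ℝ) (d : T → T → ℝ) : Prop :=
  IsGaussianProcess P U ∧
  (∀ t, Measurable fun ω => U ω t) ∧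
  (∀ t, ∫ ω, U ω t ∂P = 0) ∧
  (∀ s t, ∫ ω, U ω s * U ω t ∂P = c s t) ∧
  (∀ᵐ ω ∂P, ∀ ε > (0 : ℝ), ∃ δ > (0 : ℝ), ∀ s t, d s t < δ → |U ω s - U ω t| < ε)

/-- The weighted empirical distribution function of `X_1, …, X_n`. -/
def empCDF {Ω : Type*} {m : ℕ} (α : ℕ → ℕ → ℝ) (X : ℕ → Ω → Fin m → ℝ)
    (n : ℕ) (ω : Ω) (x : Fin m → ℝ) : ℝ :=
  ∑ i ∈ Finset.Icc 1 n, α n i * Set.indicator {y : Fin m → ℝ | y ≤ x} (fun _ => (1 : ℝ)) (X i ω)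

/-- The weighted empirical distribution function of the `n`-th row of a triangular array. -/
def empCDFrow {Ω : Type*} {m : ℕ} (α : ℕ → ℕ → ℝ) (Y : ℕ → ℕ → Ω → Fin m → ℝ)
    (n : ℕ) (ω : Ω) (x : Fin m → ℝ) : ℝ :=
  ∑ i ∈ Finset.Icc 1 n, α n i * Set.indicator {y : Fin m → ℝ | y ≤ x} (fun _ => (1 : ℝ)) (Y n i ω)

/-- The law of the `i`-th observation. -/
def lawOf {Ω : Type*} [MeasurableSpace Ω] {E : Type*} [MeasurableSpace E]
    (P : Measure Ω) (X : ℕ → Ω → E) (i : ℕ) : Measure E :=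
  Measure.map (X i) P

/-- The mixture distribution function `𝔽_n = Σ_i α_{i,n} F_i`. -/
def mixCDF {Ω : Type*} [MeasurableSpace Ω] {m : ℕ} (P : Measure Ω) (α : ℕ → ℕ → ℝ)
    (X : ℕ → Ω → Fin m → ℝ) (n : ℕ) (x : Fin m → ℝ) : ℝ :=
  ∑ i ∈ Finset.Icc 1 n, α n i * cdfm (lawOf P X i) x

/-- The weighted empirical process of a triangular array (centered at the mixture). -/
def triEmpProc {Ω : Type*} [MeasurableSpace Ω] {m : ℕ} (P : Measure Ω) (α : ℕ → ℕ → ℝ)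
    (ξ : ℕ → ℕ → Ω → Fin m → ℝ) (n : ℕ) (ω : Ω) (x : Fin m → ℝ) : ℝ :=
  Real.sqrt n * (empCDFrow α ξ n ω x -
    ∑ i ∈ Finset.Icc 1 n, α n i * cdfm (Measure.map (ξ n i) P) x)

/-- Lower `p`-quantile of the distribution of the statistic `S` under `P`. -/
def lowerQuantile {Ω : Type*} [MeasurableSpace Ω] (P : Measure Ω) (S : Ω → ℝ) (p : ℝ) : ℝ :=
  sInf {t : ℝ | p ≤ (P {ω | S ω ≤ t}).toReal}

/-- Extend a finite vector of observations to a sequence (1-based). -/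
def extendVec {E : Type*} [Inhabited E] (n : ℕ) (ys : Fin n → E) : ℕ → E :=
  fun i => if h : 1 ≤ i ∧ i ≤ n then ys ⟨i - 1, by omega⟩ else default

/-- The `p`-quantile of the Kolmogorov–Smirnov statistic computed under i.i.d.
observations with distribution `ν`. -/
def ksQuant {m : ℕ} (α : ℕ → ℕ → ℝ) (ν : Measure (Fin m → ℝ))
    (hν : IsProbabilityMeasure ν) (n : ℕ) (p : ℝ) : ℝ := by
  haveI := hν
  exact lowerQuantile (Measure.pi fun _ : Fin n => ν)
    (fun ys => Real.sqrt n * ⨆ x : Fin m → ℝ,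
      |(∑ i : Fin n, α n (i.1 + 1) *
          Set.indicator {y : Fin m → ℝ | y ≤ x} (fun _ => (1 : ℝ)) (ys i)) - cdfm ν x|) p

/-- The `p`-quantile of the Cramér–von-Mises statistic computed under i.i.d.
observations with distribution `ν`. -/
def cvmQuant {m : ℕ} (α : ℕ → ℕ → ℝ) (ν : Measure (Fin m → ℝ))
    (hν : IsProbabilityMeasure ν) (n : ℕ) (p : ℝ) : ℝ := by
  haveI := hν
  exact lowerQuantile (Measure.pi fun _ : Fin n => ν)
    (fun ys => (n : ℝ) * ∫ x, ((∑ i : Fin n, α n (i.1 + 1) *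
        Set.indicator {y : Fin m → ℝ | y ≤ x} (fun _ => (1 : ℝ)) (ys i)) - cdfm ν x) ^ 2 ∂ν) p

/- ### Parametric setting -/

/-- The continuous linear map `θ' ↦ ⟨v, θ'⟩` on `ℝ^d`, realizing a gradient. -/
def projCLM {d : ℕ} (v : Fin d → ℝ) : (Fin d → ℝ) →L[ℝ] ℝ :=
  ∑ j, v j • (ContinuousLinearMap.proj j : (Fin d → ℝ) →L[ℝ] ℝ)

/-- The estimator `ϑ̂_n = t_n(X_1,…,X_n)`. -/
def thetaHat {Ω : Type*} {m d : ℕ} (tn : ℕ → (ℕ → Fin m → ℝ) → Fin d → ℝ)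
    (X : ℕ → Ω → Fin m → ℝ) (n : ℕ) (ω : Ω) : Fin d → ℝ :=
  tn n (fun i => X i ω)

/-- The estimator applied to the `n`-th row of a triangular array,
`ϑ̂_n^{(n)} = t_n(X_1^{(n)},…,X_n^{(n)})`. -/
def thetaHatRow {Ω : Type*} {m d : ℕ} (tn : ℕ → (ℕ → Fin m → ℝ) → Fin d → ℝ)
    (Y : ℕ → ℕ → Ω → Fin m → ℝ) (n : ℕ) (ω : Ω) : Fin d → ℝ :=
  tn n (fun i => Y n i ω)

/-- Condition (C1): smoothness of `θ ↦ G_n(x,θ)` on an open convex neighborhood `U_ϑ ⊆ Θ`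
of `ϑ` with gradient `g_n(x,θ)`, continuous in `θ`. -/
def CondC1 {m d : ℕ} (νG : ℕ → (Fin d → ℝ) → Measure (Fin m → ℝ))
    (Uθ : Set (Fin d → ℝ)) (ϑ : Fin d → ℝ) (Θ : Set (Fin d → ℝ))
    (gn : ℕ → (Fin m → ℝ) → (Fin d → ℝ) → Fin d → ℝ) : Prop :=
  IsOpen Uθ ∧ Convex ℝ Uθ ∧ ϑ ∈ Uθ ∧ Uθ ⊆ Θ ∧
  (∀ n x, ∀ θ ∈ Uθ, HasFDerivAt (fun θ' => cdfm (νG n θ') x) (projCLM (gn n x θ)) θ) ∧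
  (∀ n x, ContinuousOn (gn n x) Uθ)

/-- Condition (C2): `g_n → g` uniformly on `ℝ̄^m × U_ϑ`, `g` uniformly continuous there,
and `g(·,ϑ)` bounded. -/
def CondC2 {m d : ℕ} (Uθ : Set (Fin d → ℝ)) (ϑ : Fin d → ℝ)
    (gn : ℕ → (Fin m → ℝ) → (Fin d → ℝ) → Fin d → ℝ)
    (g : (Fin m → ℝ) → (Fin d → ℝ) → Fin d → ℝ) : Prop :=
  TendstoUniformlyOn (fun n (p : (Fin m → ℝ) × (Fin d → ℝ)) => gn n p.1 p.2)
    (fun p => g p.1 p.2) atTop (Set.univ ×ˢ Uθ) ∧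
  UniformContinuousOn (fun p : (Fin m → ℝ) × (Fin d → ℝ) => g p.1 p.2) (Set.univ ×ˢ Uθ) ∧
  ∃ C, ∀ x, ‖g x ϑ‖ ≤ C

/-- Condition (C3): integrability and centering of the influence functions `ℓ_n(·,ϑ)` and
the asymptotically linear expansion `√n(ϑ̂_n − ϑ) = √n Σ_i α_{i,n} ℓ_n(X_i,ϑ) + o_p(1)`. -/
def CondC3 {Ω : Type*} [MeasurableSpace Ω] {m d : ℕ} (P : Measure Ω)
    (X : ℕ → Ω → Fin m → ℝ) (α : ℕ → ℕ → ℝ)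
    (ℓ : ℕ → (Fin m → ℝ) → Fin d → ℝ) (θhat : ℕ → Ω → Fin d → ℝ)
    (ϑ : Fin d → ℝ) : Prop :=
  (∀ n, Measurable (ℓ n)) ∧
  (∀ n, ∀ i ∈ Finset.Icc 1 n, Integrable (ℓ n) (lawOf P X i) ∧
      ∀ j k, Integrable (fun x => ℓ n x j * ℓ n x k) (lawOf P X i)) ∧
  (∀ n, 1 ≤ n → (∑ i ∈ Finset.Icc 1 n, α n i • (∫ x, ℓ n x ∂(lawOf P X i))) = 0) ∧
  TendstoInMeasure P
    (fun (n : ℕ) ω => Real.sqrt n • (θhat n ω - ϑ) -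
      Real.sqrt n • ∑ i ∈ Finset.Icc 1 n, α n i • ℓ n (X i ω)) atTop (fun _ => 0)

/-- Condition (C4): convergence of the weighted covariance quantities
`n Σ_i α_{i,n}² v_{i,n}(ϑ) → κ v(ϑ)`, `n Σ_i α_{i,n}² w_{i,n}(x,ϑ) → κ w(x,ϑ)`, together
with the Lindeberg-type condition. -/
def CondC4 {Ω : Type*} [MeasurableSpace Ω] {m d : ℕ} (P : Measure Ω)
    (X : ℕ → Ω → Fin m → ℝ) (α : ℕ → ℕ → ℝ) (κ : ℝ)
    (ℓ : ℕ → (Fin m → ℝ) → Fin d → ℝ)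
    (v : Fin d → Fin d → ℝ) (w : (Fin m → ℝ) → Fin d → ℝ) : Prop :=
  (∀ j k, Tendsto (fun n : ℕ => (n : ℝ) * ∑ i ∈ Finset.Icc 1 n, (α n i) ^ 2 *
      ∫ x, (ℓ n x j - (∫ y, ℓ n y ∂(lawOf P X i)) j) *
           (ℓ n x k - (∫ y, ℓ n y ∂(lawOf P X i)) k) ∂(lawOf P X i))
    atTop (𝓝 (κ * v j k))) ∧
  (∀ x j, Tendsto (fun n : ℕ => (n : ℝ) * ∑ i ∈ Finset.Icc 1 n, (α n i) ^ 2 *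
      ((∫ y, ℓ n y j * Set.indicator {z : Fin m → ℝ | z ≤ x} (fun _ => (1 : ℝ)) y
          ∂(lawOf P X i)) -
        (∫ y, ℓ n y ∂(lawOf P X i)) j * cdfm (lawOf P X i) x))
    atTop (𝓝 (κ * w x j))) ∧
  (∀ a : Fin d → ℝ, ∀ t > (0 : ℝ),
    Tendsto (fun n : ℕ => (n : ℝ) * ∑ i ∈ Finset.Icc 1 n, (α n i) ^ 2 *
      ∫ x, (1 + (∑ j, a j * (ℓ n x j - (∫ y, ℓ n y ∂(lawOf P X i)) j)) ^ 2) *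
        Set.indicator {x' : Fin m → ℝ |
            t < (Real.sqrt n * ⨆ j ∈ Finset.Icc 1 n, α n j) ^ 2 *
              (∑ j, a j * (ℓ n x' j - (∫ y, ℓ n y ∂(lawOf P X i)) j)) ^ 2}
          (fun _ => (1 : ℝ)) x ∂(lawOf P X i))
    atTop (𝓝 0))

/-- Condition (C5): influence functions `ℓ_n(·,θ̃)` centered under `G_n(·,θ̃)` with finite
second moments, and the asymptotically linear expansion of `ϑ̂_n^{(n)}`. -/
def CondC5 {Ω : Type*} [MeasurableSpace Ω] {m d : ℕ} (P : Measure Ω)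
    (Y : ℕ → ℕ → Ω → Fin m → ℝ) (α : ℕ → ℕ → ℝ)
    (νG : ℕ → (Fin d → ℝ) → Measure (Fin m → ℝ)) (Uθ : Set (Fin d → ℝ))
    (ℓp : ℕ → (Fin m → ℝ) → (Fin d → ℝ) → Fin d → ℝ)
    (θhatMC : ℕ → Ω → Fin d → ℝ) (θseq : ℕ → Fin d → ℝ) : Prop :=
  (∀ n, ∀ θ ∈ Uθ, Measurable (fun x => ℓp n x θ)) ∧
  (∀ n, ∀ θ ∈ Uθ, Integrable (fun x => ℓp n x θ) (νG n θ) ∧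
      (∀ j k, Integrable (fun x => ℓp n x θ j * ℓp n x θ k) (νG n θ)) ∧
      (∫ x, ℓp n x θ ∂(νG n θ)) = 0) ∧
  TendstoInMeasure P
    (fun (n : ℕ) ω => Real.sqrt n • (θhatMC n ω - θseq n) -
      Real.sqrt n • ∑ i ∈ Finset.Icc 1 n, α n i • ℓp n (Y n i ω) (θseq n)) atTop (fun _ => 0)

/-- Condition (C6): convergence `v_n^{()}(ϑ_n) → v^{()}(ϑ)`, `w_n^{()}(·,ϑ_n) → w^{()}(·,ϑ)`
and the corresponding Lindeberg-type condition. -/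
def CondC6 {m d : ℕ} (α : ℕ → ℕ → ℝ)
    (νG : ℕ → (Fin d → ℝ) → Measure (Fin m → ℝ))
    (ℓp : ℕ → (Fin m → ℝ) → (Fin d → ℝ) → Fin d → ℝ)
    (θseq : ℕ → Fin d → ℝ)
    (vpar : Fin d → Fin d → ℝ) (wpar : (Fin m → ℝ) → Fin d → ℝ) : Prop :=
  (∀ j k, Tendsto (fun n => ∫ x, ℓp n x (θseq n) j * ℓp n x (θseq n) k ∂(νG n (θseq n)))
      atTop (𝓝 (vpar j k))) ∧
  (∀ y j, Tendsto (fun n => ∫ x, ℓp n x (θseq n) j *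
      Set.indicator {z : Fin m → ℝ | z ≤ y} (fun _ => (1 : ℝ)) x ∂(νG n (θseq n)))
      atTop (𝓝 (wpar y j))) ∧
  (∀ a : Fin d → ℝ, ∀ t > (0 : ℝ), Tendsto (fun n =>
      ∫ x, (1 + (∑ j, a j * ℓp n x (θseq n) j) ^ 2) *
        Set.indicator {x' : Fin m → ℝ |
            t < (Real.sqrt n * ⨆ j ∈ Finset.Icc 1 n, α n j) ^ 2 *
              (∑ j, a j * ℓp n x' (θseq n) j) ^ 2} (fun _ => (1 : ℝ)) x ∂(νG n (θseq n)))
      atTop (𝓝 0))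

/-- The `p`-quantile of the parametric Kolmogorov–Smirnov statistic (with re-estimated
parameter) computed under i.i.d. observations with distribution `ν_n(θ)`. -/
def ksQuantParam {m d : ℕ} (α : ℕ → ℕ → ℝ) (tn : ℕ → (ℕ → Fin m → ℝ) → Fin d → ℝ)
    (νG : ℕ → (Fin d → ℝ) → Measure (Fin m → ℝ))
    (hν : ∀ n θ, IsProbabilityMeasure (νG n θ)) (n : ℕ) (θ : Fin d → ℝ) (p : ℝ) : ℝ := by
  haveI := hν n θ
  exact lowerQuantile (Measure.pi fun _ : Fin n => νG n θ)
    (fun ys => Real.sqrt n * ⨆ x : Fin m → ℝ,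
      |(∑ i : Fin n, α n (i.1 + 1) *
          Set.indicator {y : Fin m → ℝ | y ≤ x} (fun _ => (1 : ℝ)) (ys i)) -
        cdfm (νG n (tn n (extendVec n ys))) x|) p

/-- The `p`-quantile of the parametric Cramér–von-Mises statistic (with re-estimated
parameter) computed under i.i.d. observations with distribution `ν_n(θ)`. -/
def cvmQuantParam {m d : ℕ} (α : ℕ → ℕ → ℝ) (tn : ℕ → (ℕ → Fin m → ℝ) → Fin d → ℝ)
    (νG : ℕ → (Fin d → ℝ) → Measure (Fin m → ℝ))
    (hν : ∀ n θ, IsProbabilityMeasure (νG n θ)) (n : ℕ) (θ : Fin d → ℝ) (p : ℝ) : ℝ := by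
  haveI := hν n θ
  exact lowerQuantile (Measure.pi fun _ : Fin n => νG n θ)
    (fun ys => (n : ℝ) * ∫ x, ((∑ i : Fin n, α n (i.1 + 1) *
        Set.indicator {y : Fin m → ℝ | y ≤ x} (fun _ => (1 : ℝ)) (ys i)) -
          cdfm (νG n (tn n (extendVec n ys))) x) ^ 2
      ∂(νG n (tn n (extendVec n ys)))) p

/- ### Two-sample / Hadamard setting -/

/-- The supremum "distance" on `ℓ∞(A) × ℓ∞(B)`. -/
def supEDistP {A B : Type*} (f g : (A → ℝ) × (B → ℝ)) : ℝ≥0∞ :=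
  max (supEDist f.1 g.1) (supEDist f.2 g.2)

/-- The set `D(ℝ̄^m) × D(ℝ̄^s)` of pairs of distribution functions. -/
def cdfPairs (m s : ℕ) : Set (((Fin m → ℝ) → ℝ) × ((Fin s → ℝ) → ℝ)) :=
  {K | IsCDF K.1 ∧ IsCDF K.2}

/-- Continuity of a functional `D × D → D` w.r.t. the supremum metrics. -/
def SupContinuousOnPairs {A B C : Type*}
    (T : ((A → ℝ) × (B → ℝ)) → (C → ℝ)) (D : Set ((A → ℝ) × (B → ℝ))) : Prop :=
  ∀ K ∈ D, ∀ ε > (0 : ℝ), ∃ δ > (0 : ℝ), ∀ L ∈ D,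
    supEDistP K L < ENNReal.ofReal δ → supEDist (T K) (T L) < ENNReal.ofReal ε

/-- Continuity of a functional `D × D → D × D` w.r.t. the supremum metrics. -/
def SupContinuousOnPairs2 {A B : Type*}
    (j : ((A → ℝ) × (B → ℝ)) → ((A → ℝ) × (B → ℝ))) (D : Set ((A → ℝ) × (B → ℝ))) : Prop :=
  ∀ K ∈ D, ∀ ε > (0 : ℝ), ∃ δ > (0 : ℝ), ∀ L ∈ D,
    supEDistP K L < ENNReal.ofReal δ → supEDistP (j K) (j L) < ENNReal.ofReal ε

/-- Uniform Hadamard differentiability of `T` at `K` with derivative `dT(K)`: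
`dT(K)` is linear and continuous w.r.t. the supremum metrics, and
`(T(K_n + t_n L_n) − T(K_n))/t_n → dT(K)(L)` uniformly whenever `K_n → K` uniformly in `D`,
`L_n → L ∈ ℓ∞ × ℓ∞` uniformly, `t_n ↓ 0` and `K_n + t_n L_n ∈ D`. -/
def UniformHadamardAt {A B C : Type*}
    (T : ((A → ℝ) × (B → ℝ)) → (C → ℝ)) (D : Set ((A → ℝ) × (B → ℝ)))
    (K : (A → ℝ) × (B → ℝ)) (dT : ((A → ℝ) × (B → ℝ)) → (C → ℝ)) : Prop :=
  (∀ L L', dT (L + L') = dT L + dT L') ∧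
  (∀ (c : ℝ) L, dT (c • L) = c • dT L) ∧
  (∀ ε > (0 : ℝ), ∃ δ > (0 : ℝ), ∀ L, supEDistP L 0 < ENNReal.ofReal δ →
      supEDist (dT L) 0 < ENNReal.ofReal ε) ∧
  (∀ (Kn Ln : ℕ → (A → ℝ) × (B → ℝ)) (L : (A → ℝ) × (B → ℝ)) (tn : ℕ → ℝ),
    (∀ n, Kn n ∈ D) →
    Tendsto (fun n => supEDistP (Kn n) K) atTop (𝓝 0) →
    (∃ C, (∀ a, |L.1 a| ≤ C) ∧ ∀ b, |L.2 b| ≤ C) →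
    Tendsto (fun n => supEDistP (Ln n) L) atTop (𝓝 0) →
    (∀ n, 0 < tn n) → Tendsto tn atTop (𝓝 0) →
    (∀ n, Kn n + tn n • Ln n ∈ D) →
    Tendsto (fun n => supEDist
      (fun z => (T (Kn n + tn n • Ln n) z - T (Kn n) z) / tn n) (dT L)) atTop (𝓝 0))

/-- The pair of weighted empirical distribution functions of the two samples. -/
def empPair {Ω : Type*} {m s : ℕ} (αw βw : ℕ → ℕ → ℝ) (X : ℕ → Ω → Fin m → ℝ)
    (V : ℕ → Ω → Fin s → ℝ) (N : ℕ × ℕ) (ω : Ω) :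
    ((Fin m → ℝ) → ℝ) × ((Fin s → ℝ) → ℝ) :=
  (empCDF αw X N.1 ω, empCDF βw V N.2 ω)

/-- The pair of mixture distribution functions `(𝔽_n, 𝔾_r)` of the two samples. -/
def mixPair {Ω : Type*} [MeasurableSpace Ω] {m s : ℕ} (P : Measure Ω)
    (αw βw : ℕ → ℕ → ℝ) (X : ℕ → Ω → Fin m → ℝ) (V : ℕ → Ω → Fin s → ℝ) (N : ℕ × ℕ) :
    ((Fin m → ℝ) → ℝ) × ((Fin s → ℝ) → ℝ) :=
  (mixCDF P αw X N.1, mixCDF P βw V N.2)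

end

section Aux

/-- Values of a distribution function lie in `[0,1]`. -/
lemma cdfm_abs_le_one {m : ℕ} (μ : Measure (Fin m → ℝ)) [IsProbabilityMeasure μ]
    (x : Fin m → ℝ) : |cdfm μ x| ≤ 1 := by
  show |(μ {y | y ≤ x}).toReal| ≤ 1
  rw [abs_of_nonneg (ENNReal.toReal_nonneg)]
  have h := prob_le_one (μ := μ) (s := {y | y ≤ x})
  have := ENNReal.toReal_mono (by simp) h
  simpa using this

/-- Each weight is at most the (conditional) supremum, which is nonnegative. -/
lemma alpha_le_M (αw : ℕ → ℕ → ℝ)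
    (hw0 : ∀ n, ∀ i ∈ Finset.Icc 1 n, 0 ≤ αw n i)
    (hsum1 : ∀ n, 1 ≤ n → ∑ i ∈ Finset.Icc 1 n, αw n i = 1)
    {n : ℕ} (hn : 1 ≤ n) :
    0 ≤ (⨆ j ∈ Finset.Icc 1 n, αw n j) ∧
      ∀ i ∈ Finset.Icc 1 n, αw n i ≤ ⨆ j ∈ Finset.Icc 1 n, αw n j := by
  have hle1 : ∀ j ∈ Finset.Icc 1 n, αw n j ≤ 1 := fun j hj => by
    calc αw n j ≤ ∑ k ∈ Finset.Icc 1 n, αw n k :=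
          Finset.single_le_sum (fun k hk => hw0 n k hk) hj
      _ = 1 := hsum1 n hn
  have hbdd : BddAbove (Set.range fun j => ⨆ (_ : j ∈ Finset.Icc 1 n), αw n j) := by
    refine ⟨1, ?_⟩
    rintro x ⟨j, rfl⟩
    by_cases hj : j ∈ Finset.Icc 1 n
    · show (⨆ (_ : j ∈ Finset.Icc 1 n), αw n j) ≤ 1
      rw [ciSup_pos (f := fun _ => αw n j) hj]
      exact hle1 j hj
    · show (⨆ (_ : j ∈ Finset.Icc 1 n), αw n j) ≤ 1
      haveI : IsEmpty (j ∈ Finset.Icc 1 n : Prop) := ⟨hj⟩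
      rw [Real.iSup_of_isEmpty]
      norm_num
  have hiM : ∀ i ∈ Finset.Icc 1 n, αw n i ≤ ⨆ j ∈ Finset.Icc 1 n, αw n j := fun i hi =>
    le_ciSup_of_le hbdd i (le_of_eq (ciSup_pos (f := fun _ => αw n i) hi).symm)
  have h1n : (1 : ℕ) ∈ Finset.Icc 1 n := by simp [hn]
  exact ⟨(hw0 n 1 h1n).trans (hiM 1 h1n), hiM⟩

/-- Key combination lemma: a weighted mixture of uniformly convergent bounded families
converges uniformly, provided the head of the weights vanishes and the total mass
converges. -/
lemma combo {T : Type*} (w : ℕ → ℕ → ℝ) (c : ℝ)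
    (hw0 : ∀ n, ∀ i ∈ Finset.Icc 1 n, 0 ≤ w n i)
    (hsum : Tendsto (fun n : ℕ => ∑ i ∈ Finset.Icc 1 n, w n i) atTop (𝓝 c))
    (hhead : ∀ N : ℕ, Tendsto (fun n : ℕ => ∑ i ∈ Finset.Icc 1 (min N n), w n i) atTop (𝓝 0))
    (G : ℕ → T → ℝ) (L : T → ℝ)
    (hGb : ∀ i t, |G i t| ≤ 1) (hLb : ∀ t, |L t| ≤ 1)
    (hGL : TendstoUniformly G L atTop) :
    TendstoUniformly (fun n t => ∑ i ∈ Finset.Icc 1 n, w n i * G i t)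
      (fun t => c * L t) atTop := by
  rw [Metric.tendstoUniformly_iff] at hGL ⊢
  intro ε hε
  have hc1 : (0 : ℝ) < |c| + 1 := by positivity
  have hε1 : 0 < ε / (4 * (|c| + 1)) := by positivity
  obtain ⟨N₁, hN₁⟩ := eventually_atTop.mp (hGL _ hε1)
  have hev1 : ∀ᶠ n : ℕ in atTop, ∑ i ∈ Finset.Icc 1 (min N₁ n), w n i < ε / 8 :=
    (hhead N₁).eventually_lt_const (by positivity)
  have hev2 : ∀ᶠ n : ℕ in atTop,
      |(∑ i ∈ Finset.Icc 1 n, w n i) - c| < min (ε / 4) 1 := by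
    have := Metric.tendsto_nhds.mp hsum (min (ε / 4) 1) (by positivity)
    simpa [Real.dist_eq] using this
  filter_upwards [hev1, hev2] with n h1 h2 t
  rw [Real.dist_eq]
  have key : c * L t - ∑ i ∈ Finset.Icc 1 n, w n i * G i t
      = -((∑ i ∈ Finset.Icc 1 n, w n i * (G i t - L t))
          + ((∑ i ∈ Finset.Icc 1 n, w n i) - c) * L t) := by
    simp only [mul_sub]
    rw [Finset.sum_sub_distrib, ← Finset.sum_mul]
    ring
  rw [key, abs_neg]
  have hA : |∑ i ∈ Finset.Icc 1 n, w n i * (G i t - L t)|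
      ≤ ∑ i ∈ Finset.Icc 1 n, w n i * |G i t - L t| := by
    refine (Finset.abs_sum_le_sum_abs _ _).trans (le_of_eq ?_)
    refine Finset.sum_congr rfl fun i hi => ?_
    rw [abs_mul, abs_of_nonneg (hw0 n i hi)]
  have hfe : (Finset.Icc 1 n).filter (fun i => i ≤ N₁) = Finset.Icc 1 (min N₁ n) := by
    ext i
    simp only [Finset.mem_filter, Finset.mem_Icc, le_min_iff]
    omega
  have hsplit := Finset.sum_filter_add_sum_filter_not (Finset.Icc 1 n)
    (fun i => i ≤ N₁) (fun i => w n i * |G i t - L t|)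
  have h_head : ∑ i ∈ Finset.Icc 1 (min N₁ n), w n i * |G i t - L t|
      ≤ 2 * ∑ i ∈ Finset.Icc 1 (min N₁ n), w n i := by
    rw [Finset.mul_sum]
    refine Finset.sum_le_sum fun i hi => ?_
    have hi' : i ∈ Finset.Icc 1 n := by
      simp only [Finset.mem_Icc, le_min_iff] at hi ⊢; omega
    have hb2 : |G i t - L t| ≤ 2 := by
      have := abs_add_le (G i t) (-(L t))
      have h1 := hGb i t
      have h2 := hLb t
      simp only [abs_neg] at this
      calc |G i t - L t| = |G i t + -(L t)| := by ring_nf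
        _ ≤ |G i t| + |L t| := this
        _ ≤ 2 := by linarith
    calc w n i * |G i t - L t| ≤ w n i * 2 :=
          mul_le_mul_of_nonneg_left hb2 (hw0 n i hi')
      _ = 2 * w n i := by ring
  have h_tail : ∑ i ∈ (Finset.Icc 1 n).filter (fun i => ¬ i ≤ N₁), w n i * |G i t - L t|
      ≤ ε / (4 * (|c| + 1)) * ∑ i ∈ Finset.Icc 1 n, w n i := by
    calc ∑ i ∈ (Finset.Icc 1 n).filter (fun i => ¬ i ≤ N₁), w n i * |G i t - L t|
        ≤ ∑ i ∈ (Finset.Icc 1 n).filter (fun i => ¬ i ≤ N₁), w n i * (ε / (4 * (|c| + 1))) := by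
          refine Finset.sum_le_sum fun i hi => ?_
          rw [Finset.mem_filter] at hi
          have hdist := hN₁ i (by omega) t
          rw [Real.dist_eq] at hdist
          have : |G i t - L t| ≤ ε / (4 * (|c| + 1)) := by
            rw [abs_sub_comm]; exact le_of_lt hdist
          exact mul_le_mul_of_nonneg_left this (hw0 n i hi.1)
      _ = ε / (4 * (|c| + 1)) * ∑ i ∈ (Finset.Icc 1 n).filter (fun i => ¬ i ≤ N₁), w n i := by
          rw [← Finset.sum_mul]; ring
      _ ≤ ε / (4 * (|c| + 1)) * ∑ i ∈ Finset.Icc 1 n, w n i := by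
          refine mul_le_mul_of_nonneg_left ?_ (le_of_lt hε1)
          exact Finset.sum_le_sum_of_subset_of_nonneg (Finset.filter_subset _ _)
            (fun i hi _ => hw0 n i hi)
  have hwsum_le : ∑ i ∈ Finset.Icc 1 n, w n i ≤ |c| + 1 := by
    have h2' : |(∑ i ∈ Finset.Icc 1 n, w n i) - c| < 1 := lt_of_lt_of_le h2 (min_le_right _ _)
    have hx := abs_lt.mp h2'
    have hy := le_abs_self c
    linarith [hx.2]
  have h_tail' : ε / (4 * (|c| + 1)) * ∑ i ∈ Finset.Icc 1 n, w n i ≤ ε / 4 := by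
    have : ε / (4 * (|c| + 1)) * (|c| + 1) = ε / 4 := by field_simp
    calc ε / (4 * (|c| + 1)) * ∑ i ∈ Finset.Icc 1 n, w n i
        ≤ ε / (4 * (|c| + 1)) * (|c| + 1) :=
          mul_le_mul_of_nonneg_left hwsum_le (le_of_lt hε1)
      _ = ε / 4 := this
  have hB : |((∑ i ∈ Finset.Icc 1 n, w n i) - c) * L t| ≤ ε / 4 := by
    rw [abs_mul]
    have h2' : |(∑ i ∈ Finset.Icc 1 n, w n i) - c| ≤ ε / 4 :=
      le_of_lt (lt_of_lt_of_le h2 (min_le_left _ _))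
    calc |(∑ i ∈ Finset.Icc 1 n, w n i) - c| * |L t|
        ≤ (ε / 4) * 1 := mul_le_mul h2' (hLb t) (abs_nonneg _) (by positivity)
      _ = ε / 4 := by ring
  calc |(∑ i ∈ Finset.Icc 1 n, w n i * (G i t - L t))
        + ((∑ i ∈ Finset.Icc 1 n, w n i) - c) * L t|
      ≤ |∑ i ∈ Finset.Icc 1 n, w n i * (G i t - L t)|
        + |((∑ i ∈ Finset.Icc 1 n, w n i) - c) * L t| := abs_add_le _ _
    _ ≤ (∑ i ∈ Finset.Icc 1 n, w n i * |G i t - L t|) + ε / 4 := by linarith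
    _ = ((∑ i ∈ Finset.Icc 1 (min N₁ n), w n i * |G i t - L t|)
        + ∑ i ∈ (Finset.Icc 1 n).filter (fun i => ¬ i ≤ N₁), w n i * |G i t - L t|) + ε / 4 := by
          rw [← hsplit, hfe]
    _ ≤ (2 * (∑ i ∈ Finset.Icc 1 (min N₁ n), w n i)
        + ε / (4 * (|c| + 1)) * ∑ i ∈ Finset.Icc 1 n, w n i) + ε / 4 := by linarith
    _ < ε := by nlinarith [h1, h_tail']

end Aux

set_option maxHeartbeats 1000000 in
/-- Remark 2 of the paper: convergence of weighted mixtures of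
distribution functions. -/
theorem statement1 {m : ℕ} (μ : ℕ → Measure (Fin m → ℝ))
    (hμ : ∀ i, IsProbabilityMeasure (μ i))
    (K : (Fin m → ℝ) → ℝ) (hK : IsCDF K) (hKuc : UniformContinuous K)
    (hKconv : TendstoUniformly (fun i => cdfm (μ i)) K atTop)
    (αw : ℕ → ℕ → ℝ) (κ : ℝ) (hα : WeightsOK αw κ) :
    TendstoUniformly
      (fun (n : ℕ) x => ∑ i ∈ Finset.Icc 1 n, αw n i * cdfm (μ i) x) K atTop ∧
    TendstoUniformly
      (fun (n : ℕ) x => (n : ℝ) * ∑ i ∈ Finset.Icc 1 n, (αw n i) ^ 2 * cdfm (μ i) x)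
      (fun x => κ * K x) atTop ∧
    Tendsto (fun n : ℕ => ⨆ p : (Fin m → ℝ) × (Fin m → ℝ),
        |(n : ℝ) * ∑ i ∈ Finset.Icc 1 n, (αw n i) ^ 2 * (cdfm (μ i) p.1 * cdfm (μ i) p.2) -
          κ * (K p.1 * K p.2)|) atTop (𝓝 0) := by
  obtain ⟨hw0, hsum1, hmax, hκconv, hκ1⟩ := hα
  obtain ⟨ν, hν, rfl⟩ := hK
  haveI := hν
  -- bounds on the distribution functions
  have hGb : ∀ i x, |cdfm (μ i) x| ≤ 1 := fun i x => @cdfm_abs_le_one m (μ i) (hμ i) x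
  have hLb : ∀ x, |cdfm ν x| ≤ 1 := fun x => cdfm_abs_le_one ν x
  -- the vanishing maximal weight
  set s : ℕ → ℝ := fun n => Real.sqrt n * ⨆ i ∈ Finset.Icc 1 n, αw n i with hs_def
  have hαs : ∀ n, 1 ≤ n → ∀ i ∈ Finset.Icc 1 n, 0 ≤ s n ∧ αw n i ≤ s n ∧
      (n : ℝ) * αw n i ^ 2 ≤ s n ^ 2 := by
    intro n hn i hi
    obtain ⟨hM0, hiM⟩ := alpha_le_M αw hw0 hsum1 hn
    have hsq : (1 : ℝ) ≤ Real.sqrt n := by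
      rw [show (1 : ℝ) = Real.sqrt 1 by simp]
      exact Real.sqrt_le_sqrt (by exact_mod_cast hn)
    have hs0 : 0 ≤ s n := mul_nonneg (Real.sqrt_nonneg _) hM0
    have hαle : αw n i ≤ s n :=
      (hiM i hi).trans (le_mul_of_one_le_left hM0 hsq)
    refine ⟨hs0, hαle, ?_⟩
    have h1 : (n : ℝ) * αw n i ^ 2 = (Real.sqrt n * αw n i) ^ 2 := by
      rw [mul_pow, Real.sq_sqrt (by positivity)]
    rw [h1]
    have h2 : Real.sqrt n * αw n i ≤ s n :=
      mul_le_mul_of_nonneg_left (hiM i hi) (Real.sqrt_nonneg _)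
    have h3 : 0 ≤ Real.sqrt n * αw n i :=
      mul_nonneg (Real.sqrt_nonneg _) (hw0 n i hi)
    exact pow_le_pow_left₀ h3 h2 2
  -- head conditions
  have head1 : ∀ N : ℕ,
      Tendsto (fun n : ℕ => ∑ i ∈ Finset.Icc 1 (min N n), αw n i) atTop (𝓝 0) := by
    intro N
    have hN0 : Tendsto (fun n : ℕ => (N : ℝ) * s n) atTop (𝓝 0) := by
      have h0 := hmax.const_mul (N : ℝ)
      simp only [mul_zero] at h0
      exact h0
    refine tendsto_of_tendsto_of_tendsto_of_le_of_le' tendsto_const_nhds hN0 ?_ ?_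
    · filter_upwards [eventually_ge_atTop 1] with n hn
      refine Finset.sum_nonneg fun i hi => hw0 n i ?_
      simp only [Finset.mem_Icc, le_min_iff] at hi ⊢; omega
    · filter_upwards [eventually_ge_atTop 1] with n hn
      have hs0 : 0 ≤ s n := by
        have h1n : (1 : ℕ) ∈ Finset.Icc 1 n := by simp [hn]
        exact (hαs n hn 1 h1n).1
      calc ∑ i ∈ Finset.Icc 1 (min N n), αw n i ≤ ∑ _i ∈ Finset.Icc 1 (min N n), s n := by
            refine Finset.sum_le_sum fun i hi => ?_
            have hi' : i ∈ Finset.Icc 1 n := by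
              simp only [Finset.mem_Icc, le_min_iff] at hi ⊢; omega
            exact (hαs n hn i hi').2.1
        _ = (min N n : ℝ) * s n := by
            simp [Finset.sum_const, Nat.card_Icc]
        _ ≤ (N : ℝ) * s n := by
            refine mul_le_mul_of_nonneg_right ?_ hs0
            exact_mod_cast min_le_left N n
  have head2 : ∀ N : ℕ,
      Tendsto (fun n : ℕ => ∑ i ∈ Finset.Icc 1 (min N n), (n : ℝ) * αw n i ^ 2)
        atTop (𝓝 0) := by
    intro N
    have hN0 : Tendsto (fun n : ℕ => (N : ℝ) * (s n * s n)) atTop (𝓝 0) := by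
      have h0 := (hmax.mul hmax).const_mul (N : ℝ)
      simp only [mul_zero] at h0
      exact h0
    refine tendsto_of_tendsto_of_tendsto_of_le_of_le' tendsto_const_nhds hN0 ?_ ?_
    · filter_upwards with n
      exact Finset.sum_nonneg fun i _ => by positivity
    · filter_upwards [eventually_ge_atTop 1] with n hn
      have hs0 : 0 ≤ s n := by
        have h1n : (1 : ℕ) ∈ Finset.Icc 1 n := by simp [hn]
        exact (hαs n hn 1 h1n).1
      calc ∑ i ∈ Finset.Icc 1 (min N n), (n : ℝ) * αw n i ^ 2
          ≤ ∑ _i ∈ Finset.Icc 1 (min N n), s n ^ 2 := by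
            refine Finset.sum_le_sum fun i hi => ?_
            have hi' : i ∈ Finset.Icc 1 n := by
              simp only [Finset.mem_Icc, le_min_iff] at hi ⊢; omega
            exact (hαs n hn i hi').2.2
        _ = (min N n : ℝ) * (s n * s n) := by
            simp [Finset.sum_const, Nat.card_Icc, sq]
        _ ≤ (N : ℝ) * (s n * s n) := by
            refine mul_le_mul_of_nonneg_right ?_ (mul_self_nonneg _)
            exact_mod_cast min_le_left N n
  -- total-mass conditions
  have hsum_one : Tendsto (fun n : ℕ => ∑ i ∈ Finset.Icc 1 n, αw n i) atTop (𝓝 1) := by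
    refine Tendsto.congr' ?_ (tendsto_const_nhds : Tendsto (fun _ : ℕ => (1 : ℝ)) atTop (𝓝 1))
    filter_upwards [eventually_ge_atTop 1] with n hn
    exact (hsum1 n hn).symm
  have hsum_κ : Tendsto (fun n : ℕ => ∑ i ∈ Finset.Icc 1 n, (n : ℝ) * αw n i ^ 2)
      atTop (𝓝 κ) := by
    have heq : (fun n : ℕ => ∑ i ∈ Finset.Icc 1 n, (n : ℝ) * αw n i ^ 2)
        = fun n : ℕ => (n : ℝ) * ∑ i ∈ Finset.Icc 1 n, αw n i ^ 2 := by
      funext n; rw [Finset.mul_sum]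
    rw [heq]; exact hκconv
  have hw0' : ∀ n : ℕ, ∀ i ∈ Finset.Icc 1 n, (0 : ℝ) ≤ (n : ℝ) * αw n i ^ 2 :=
    fun n i _ => by positivity
  -- part (i)
  have part1 : TendstoUniformly
      (fun (n : ℕ) x => ∑ i ∈ Finset.Icc 1 n, αw n i * cdfm (μ i) x) (cdfm ν) atTop := by
    have h := combo αw 1 hw0 hsum_one head1 (fun i => cdfm (μ i)) (cdfm ν) hGb hLb hKconv
    simpa using h
  -- part (ii)
  have part2 : TendstoUniformly
      (fun (n : ℕ) x => (n : ℝ) * ∑ i ∈ Finset.Icc 1 n, (αw n i) ^ 2 * cdfm (μ i) x)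
      (fun x => κ * cdfm ν x) atTop := by
    have h := combo (fun n i => (n : ℝ) * αw n i ^ 2) κ hw0' hsum_κ head2
      (fun i => cdfm (μ i)) (cdfm ν) hGb hLb hKconv
    have heq : (fun (n : ℕ) x => (n : ℝ) * ∑ i ∈ Finset.Icc 1 n, (αw n i) ^ 2 * cdfm (μ i) x)
        = fun (n : ℕ) x => ∑ i ∈ Finset.Icc 1 n, ((n : ℝ) * αw n i ^ 2) * cdfm (μ i) x := by
      funext n x
      rw [Finset.mul_sum]
      exact Finset.sum_congr rfl fun i _ => by ring
    rw [heq]; exact h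
  refine ⟨part1, part2, ?_⟩
  -- part (iii)
  have hGb2 : ∀ i (p : (Fin m → ℝ) × (Fin m → ℝ)), |cdfm (μ i) p.1 * cdfm (μ i) p.2| ≤ 1 :=
    fun i p => by
      rw [abs_mul]
      calc |cdfm (μ i) p.1| * |cdfm (μ i) p.2| ≤ 1 * 1 :=
            mul_le_mul (hGb i p.1) (hGb i p.2) (abs_nonneg _) zero_le_one
        _ = 1 := by ring
  have hLb2 : ∀ p : (Fin m → ℝ) × (Fin m → ℝ), |cdfm ν p.1 * cdfm ν p.2| ≤ 1 := fun p => by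
    rw [abs_mul]
    calc |cdfm ν p.1| * |cdfm ν p.2| ≤ 1 * 1 :=
          mul_le_mul (hLb p.1) (hLb p.2) (abs_nonneg _) zero_le_one
      _ = 1 := by ring
  have hGL2 : TendstoUniformly
      (fun i (p : (Fin m → ℝ) × (Fin m → ℝ)) => cdfm (μ i) p.1 * cdfm (μ i) p.2)
      (fun p => cdfm ν p.1 * cdfm ν p.2) atTop := by
    rw [Metric.tendstoUniformly_iff] at hKconv ⊢
    intro ε hε
    filter_upwards [hKconv (ε / 2) (by positivity)] with i hi p
    have h1 := hi p.1
    have h2 := hi p.2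
    rw [Real.dist_eq] at h1 h2 ⊢
    have key : cdfm ν p.1 * cdfm ν p.2 - cdfm (μ i) p.1 * cdfm (μ i) p.2
        = cdfm ν p.1 * (cdfm ν p.2 - cdfm (μ i) p.2)
          + (cdfm ν p.1 - cdfm (μ i) p.1) * cdfm (μ i) p.2 := by ring
    calc |cdfm ν p.1 * cdfm ν p.2 - cdfm (μ i) p.1 * cdfm (μ i) p.2|
        ≤ |cdfm ν p.1 * (cdfm ν p.2 - cdfm (μ i) p.2)|
          + |(cdfm ν p.1 - cdfm (μ i) p.1) * cdfm (μ i) p.2| := by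
            rw [key]; exact abs_add_le _ _
      _ ≤ 1 * |cdfm ν p.2 - cdfm (μ i) p.2| + |cdfm ν p.1 - cdfm (μ i) p.1| * 1 := by
            rw [abs_mul, abs_mul]
            gcongr
            · exact hLb p.1
            · exact hGb i p.2
      _ < ε := by rw [one_mul, mul_one]; linarith
  have h3 := combo (fun n i => (n : ℝ) * αw n i ^ 2) κ hw0' hsum_κ head2
    (fun i (p : (Fin m → ℝ) × (Fin m → ℝ)) => cdfm (μ i) p.1 * cdfm (μ i) p.2)
    (fun p => cdfm ν p.1 * cdfm ν p.2) hGb2 hLb2 hGL2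
  rw [Metric.tendstoUniformly_iff] at h3
  rw [Metric.tendsto_nhds]
  intro ε hε
  filter_upwards [h3 (ε / 2) (by positivity)] with n hn
  have hbound : ∀ p : (Fin m → ℝ) × (Fin m → ℝ),
      |(n : ℝ) * ∑ i ∈ Finset.Icc 1 n, (αw n i) ^ 2 * (cdfm (μ i) p.1 * cdfm (μ i) p.2) -
        κ * (cdfm ν p.1 * cdfm ν p.2)| ≤ ε / 2 := by
    intro p
    have h := hn p
    rw [Real.dist_eq] at h
    have heq : (n : ℝ) * ∑ i ∈ Finset.Icc 1 n, (αw n i) ^ 2 * (cdfm (μ i) p.1 * cdfm (μ i) p.2)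
        = ∑ i ∈ Finset.Icc 1 n, ((n : ℝ) * αw n i ^ 2) * (cdfm (μ i) p.1 * cdfm (μ i) p.2) := by
      rw [Finset.mul_sum]
      exact Finset.sum_congr rfl fun i _ => by ring
    rw [heq, abs_sub_comm]
    exact le_of_lt h
  have hbdd : BddAbove (Set.range fun p : (Fin m → ℝ) × (Fin m → ℝ) =>
      |(n : ℝ) * ∑ i ∈ Finset.Icc 1 n, (αw n i) ^ 2 * (cdfm (μ i) p.1 * cdfm (μ i) p.2) -
        κ * (cdfm ν p.1 * cdfm ν p.2)|) := by
    refine ⟨ε / 2, ?_⟩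
    rintro x ⟨p, rfl⟩
    exact hbound p
  have hsup_le : (⨆ p : (Fin m → ℝ) × (Fin m → ℝ),
      |(n : ℝ) * ∑ i ∈ Finset.Icc 1 n, (αw n i) ^ 2 * (cdfm (μ i) p.1 * cdfm (μ i) p.2) -
        κ * (cdfm ν p.1 * cdfm ν p.2)|) ≤ ε / 2 := ciSup_le hbound
  have hsup_nonneg : 0 ≤ ⨆ p : (Fin m → ℝ) × (Fin m → ℝ),
      |(n : ℝ) * ∑ i ∈ Finset.Icc 1 n, (αw n i) ^ 2 * (cdfm (μ i) p.1 * cdfm (μ i) p.2) -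
        κ * (cdfm ν p.1 * cdfm ν p.2)| := by
    obtain ⟨p⟩ : Nonempty ((Fin m → ℝ) × (Fin m → ℝ)) := inferInstance
    exact le_trans (abs_nonneg _) (le_ciSup hbdd p)
  rw [Real.dist_eq, sub_zero, abs_of_nonneg hsup_nonneg]
  linarith
end

section
/- In the goodness-of-fit setting with independent ℝ^m-valued X_1, X_2, … whose distribution functions F_i converge uniformly to a uniformly continuous F, with G_n → G uniformly (G uniformly continuous) and weights α_{i,n} as in the standing assumptions, the following hold without any hypothesis relating 𝔽_n and G_n: for every ε > 0, P( KS_n/√n ≥ sup_{x ∈ [-∞,∞]^m} |F(x) − G(x)| − ε + o_p(1) ) → 1 as n → ∞, and for every ε > 0, P( CvM_n/n ≥ ∫ (F(x) − G(x))² dG(x) − ε + o_p(1) ) → 1 as n → ∞. -/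
open MeasureTheory ProbabilityTheory Filter Topology
open scoped ENNReal NNReal

namespace St7

variable {m : ℕ}

lemma msLe (x : Fin m → ℝ) : MeasurableSet {y : Fin m → ℝ | y ≤ x} := by
  have : {y : Fin m → ℝ | y ≤ x} = ⋂ j, {y | y j ≤ x j} := by
    ext y; simp [Pi.le_def]
  rw [this]
  exact MeasurableSet.iInter fun j =>
    measurableSet_le (measurable_pi_apply j) measurable_const

lemma msGe (x : Fin m → ℝ) : MeasurableSet {y : Fin m → ℝ | x ≤ y} := by
  have : {y : Fin m → ℝ | x ≤ y} = ⋂ j, {y | x j ≤ y j} := by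
    ext y; simp [Pi.le_def]
  rw [this]
  exact MeasurableSet.iInter fun j =>
    measurableSet_le measurable_const (measurable_pi_apply j)

lemma msLe2 : MeasurableSet {p : (Fin m → ℝ) × (Fin m → ℝ) | p.2 ≤ p.1} := by
  have : {p : (Fin m → ℝ) × (Fin m → ℝ) | p.2 ≤ p.1} = ⋂ j, {p | p.2 j ≤ p.1 j} := by
    ext p; simp [Pi.le_def]
  rw [this]
  exact MeasurableSet.iInter fun j =>
    measurableSet_le (measurable_snd.eval) (measurable_fst.eval)

lemma msLe2' : MeasurableSet {p : (Fin m → ℝ) × (Fin m → ℝ) | p.1 ≤ p.2} := by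
  have : {p : (Fin m → ℝ) × (Fin m → ℝ) | p.1 ≤ p.2} = ⋂ j, {p | p.1 j ≤ p.2 j} := by
    ext p; simp [Pi.le_def]
  rw [this]
  exact MeasurableSet.iInter fun j =>
    measurableSet_le (measurable_fst.eval) (measurable_snd.eval)

lemma cdfm_nonneg (μ : Measure (Fin m → ℝ)) (x : Fin m → ℝ) : 0 ≤ cdfm μ x :=
  ENNReal.toReal_nonneg

lemma cdfm_le_one (μ : Measure (Fin m → ℝ)) [IsProbabilityMeasure μ] (x : Fin m → ℝ) :
    cdfm μ x ≤ 1 := by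
  have h1 : μ {y | y ≤ x} ≤ 1 := prob_le_one
  exact ENNReal.toReal_le_of_le_ofReal zero_le_one (by simpa using h1)

lemma measurable_cdfm (μ : Measure (Fin m → ℝ)) [SFinite μ] : Measurable (cdfm μ) := by
  have h : Measurable fun x : Fin m → ℝ => μ (Prod.mk x ⁻¹' {p : (Fin m → ℝ) × (Fin m → ℝ) | p.2 ≤ p.1}) :=
    measurable_measure_prodMk_left msLe2
  have h2 : (fun x : Fin m → ℝ => μ {y | y ≤ x}) = fun x => μ (Prod.mk x ⁻¹' {p : (Fin m → ℝ) × (Fin m → ℝ) | p.2 ≤ p.1}) := by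
    funext x; rfl
  have : cdfm μ = fun x => (μ (Prod.mk x ⁻¹' {p : (Fin m → ℝ) × (Fin m → ℝ) | p.2 ≤ p.1})).toReal := by
    funext x; rfl
  rw [this]
  exact h.ennreal_toReal

/-- survival function stuff -/
lemma measurable_surv (μ : Measure (Fin m → ℝ)) [SFinite μ] :
    Measurable fun w : Fin m → ℝ => (μ {x | w ≤ x}).toReal := by
  have h : Measurable fun w : Fin m → ℝ => μ (Prod.mk w ⁻¹' {p : (Fin m → ℝ) × (Fin m → ℝ) | p.1 ≤ p.2}) :=
    measurable_measure_prodMk_left msLe2'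
  have h2 : (fun w : Fin m → ℝ => μ {x | w ≤ x}) = fun w => μ (Prod.mk w ⁻¹' {p : (Fin m → ℝ) × (Fin m → ℝ) | p.1 ≤ p.2}) := by
    funext w; rfl
  rw [show (fun w : Fin m → ℝ => (μ {x | w ≤ x}).toReal) = fun w => (μ (Prod.mk w ⁻¹' {p : (Fin m → ℝ) × (Fin m → ℝ) | p.1 ≤ p.2})).toReal from rfl]
  exact h.ennreal_toReal


lemma msC (w : Fin m → ℝ) (t : Finset (Fin m)) :
    MeasurableSet {x : Fin m → ℝ | ∀ j ∈ t, x j < w j} := by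
  have : {x : Fin m → ℝ | ∀ j ∈ t, x j < w j} = ⋂ j ∈ t, {x | x j < w j} := by
    ext x; simp
  rw [this]
  exact MeasurableSet.biInter t.countable_toSet fun j _ =>
    measurableSet_lt (measurable_pi_apply j) measurable_const

lemma C_close (ρ ν : Measure (Fin m → ℝ)) [IsProbabilityMeasure ρ] [IsProbabilityMeasure ν]
    {δ : ℝ} (h : ∀ t, |cdfm ρ t - cdfm ν t| ≤ δ) (w : Fin m → ℝ) (t : Finset (Fin m)) :
    |(ρ {x | ∀ j ∈ t, x j < w j}).toReal - (ν {x | ∀ j ∈ t, x j < w j}).toReal| ≤ δ := by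
  classical
  set p : ℕ → (Fin m → ℝ) := fun k j => if j ∈ t then w j - 1/((k:ℝ)+1) else (k:ℝ) with hp
  have hmono : Monotone fun k => {x : Fin m → ℝ | x ≤ p k} := by
    intro k k' hkk x hx
    rw [Set.mem_setOf_eq, Pi.le_def] at hx ⊢
    intro j
    refine le_trans (hx j) ?_
    by_cases hj : j ∈ t
    · simp only [hp, hj, if_true]
      have h1 : (1:ℝ)/((k':ℝ)+1) ≤ 1/((k:ℝ)+1) := by
        apply one_div_le_one_div_of_le
        · positivity
        · have : (k:ℝ) ≤ k' := by exact_mod_cast hkk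
          linarith
      linarith
    · simp only [hp, hj, if_false]
      exact_mod_cast hkk
  have hUnion : (⋃ k, {x : Fin m → ℝ | x ≤ p k}) = {x | ∀ j ∈ t, x j < w j} := by
    ext x
    simp only [Set.mem_iUnion, Set.mem_setOf_eq]
    constructor
    · rintro ⟨k, hk⟩ j hj
      rw [Pi.le_def] at hk
      have := hk j
      simp only [hp, hj, if_true] at this
      have hpos : (0:ℝ) < 1/((k:ℝ)+1) := by positivity
      linarith
    · intro hx
      have hev : ∀ᶠ k : ℕ in atTop, ∀ j, x j ≤ p k j := by
        rw [eventually_all]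
        intro j
        by_cases hj : j ∈ t
        · have hlt : (0:ℝ) < w j - x j := by have := hx j hj; linarith
          have htend : Tendsto (fun k : ℕ => 1/((k:ℝ)+1)) atTop (𝓝 0) :=
            tendsto_one_div_add_atTop_nhds_zero_nat
          filter_upwards [htend.eventually_lt_const hlt] with k hk
          simp only [hp, hj, if_true]; linarith
        · filter_upwards [(tendsto_natCast_atTop_atTop (R := ℝ)).eventually_ge_atTop (x j)] with k hk
          simp only [hp, hj, if_false]; exact hk
      obtain ⟨k, hk⟩ := hev.exists
      exact ⟨k, fun j => hk j⟩
  have hrho := tendsto_measure_iUnion_atTop (μ := ρ) hmono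
  have hnu := tendsto_measure_iUnion_atTop (μ := ν) hmono
  rw [hUnion] at hrho hnu
  have hrhoR : Tendsto (fun k => (ρ {x : Fin m → ℝ | x ≤ p k}).toReal) atTop
      (𝓝 ((ρ {x | ∀ j ∈ t, x j < w j}).toReal)) :=
    (ENNReal.tendsto_toReal (measure_ne_top ρ _)).comp hrho
  have hnuR : Tendsto (fun k => (ν {x : Fin m → ℝ | x ≤ p k}).toReal) atTop
      (𝓝 ((ν {x | ∀ j ∈ t, x j < w j}).toReal)) :=
    (ENNReal.tendsto_toReal (measure_ne_top ν _)).comp hnu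
  refine le_of_tendsto ((hrhoR.sub hnuR).abs) (Filter.Eventually.of_forall fun k => ?_)
  have := h (p k)
  simpa [cdfm] using this

lemma indicator_upper_expand (w x : Fin m → ℝ) :
    Set.indicator {x' : Fin m → ℝ | w ≤ x'} (fun _ => (1:ℝ)) x
      = ∑ t ∈ (Finset.univ : Finset (Fin m)).powerset,
          (-1:ℝ)^t.card * Set.indicator {x' : Fin m → ℝ | ∀ j ∈ t, x' j < w j} (fun _ => (1:ℝ)) x := by
  classical
  have h1 : Set.indicator {x' : Fin m → ℝ | w ≤ x'} (fun _ => (1:ℝ)) x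
      = ∏ j : Fin m, ((-(if x j < w j then (1:ℝ) else 0)) + 1) := by
    have hfac : ∀ j : Fin m, (-(if x j < w j then (1:ℝ) else 0)) + 1
        = if w j ≤ x j then (1:ℝ) else 0 := by
      intro j
      by_cases hj : x j < w j
      · rw [if_pos hj, if_neg (not_le.2 hj)]; ring
      · rw [if_neg hj, if_pos (not_lt.1 hj)]; ring
    rw [Finset.prod_congr rfl (fun j _ => hfac j), Finset.prod_boole]
    simp [Set.indicator_apply, Pi.le_def]
  rw [h1, Finset.prod_add]
  refine Finset.sum_congr rfl fun t _ => ?_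
  rw [Finset.prod_const_one, mul_one]
  have h2 : ∏ j ∈ t, (-(if x j < w j then (1:ℝ) else 0))
      = (-1:ℝ)^t.card * ∏ j ∈ t, (if x j < w j then (1:ℝ) else 0) := by
    rw [← Finset.prod_const (b := (-1:ℝ)), ← Finset.prod_mul_distrib]
    exact Finset.prod_congr rfl fun j _ => by ring
  rw [h2, Finset.prod_boole]
  simp [Set.indicator_apply]

lemma int_ind (ρ : Measure (Fin m → ℝ)) {s : Set (Fin m → ℝ)} (hs : MeasurableSet s) :
    ∫ x, Set.indicator s (fun _ => (1:ℝ)) x ∂ρ = (ρ s).toReal :=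
  integral_indicator_one hs

lemma surv_repr (ρ : Measure (Fin m → ℝ)) [IsProbabilityMeasure ρ] (w : Fin m → ℝ) :
    (ρ {x | w ≤ x}).toReal
      = ∑ t ∈ (Finset.univ : Finset (Fin m)).powerset,
          (-1:ℝ)^t.card * (ρ {x | ∀ j ∈ t, x j < w j}).toReal := by
  classical
  have h1 : (ρ {x | w ≤ x}).toReal
      = ∫ x, Set.indicator {x' : Fin m → ℝ | w ≤ x'} (fun _ => (1:ℝ)) x ∂ρ := by
    rw [int_ind ρ (msGe w)]
  rw [h1]
  have h2 : ∀ x, Set.indicator {x' : Fin m → ℝ | w ≤ x'} (fun _ => (1:ℝ)) x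
      = ∑ t ∈ (Finset.univ : Finset (Fin m)).powerset,
          (-1:ℝ)^t.card * Set.indicator {x' : Fin m → ℝ | ∀ j ∈ t, x' j < w j} (fun _ => (1:ℝ)) x :=
    indicator_upper_expand w
  rw [integral_congr_ae (Filter.Eventually.of_forall h2), integral_finset_sum]
  · refine Finset.sum_congr rfl fun t _ => ?_
    rw [integral_const_mul, int_ind ρ (msC w t)]
  · intro t _
    exact ((integrable_const (1:ℝ)).indicator (msC w t)).const_mul _

lemma surv_close (ρ ν : Measure (Fin m → ℝ)) [IsProbabilityMeasure ρ] [IsProbabilityMeasure ν]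
    {δ : ℝ} (h : ∀ t, |cdfm ρ t - cdfm ν t| ≤ δ) (w : Fin m → ℝ) :
    |(ρ {x | w ≤ x}).toReal - (ν {x | w ≤ x}).toReal| ≤ 2^m * δ := by
  classical
  rw [surv_repr ρ w, surv_repr ν w, ← Finset.sum_sub_distrib]
  have hb : ∀ t ∈ (Finset.univ : Finset (Fin m)).powerset,
      |(-1:ℝ)^t.card * (ρ {x | ∀ j ∈ t, x j < w j}).toReal
        - (-1:ℝ)^t.card * (ν {x | ∀ j ∈ t, x j < w j}).toReal| ≤ δ := by
    intro t _
    rw [← mul_sub, abs_mul, abs_pow, abs_neg, abs_one, one_pow, one_mul]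
    exact C_close ρ ν h w t
  calc |∑ t ∈ (Finset.univ : Finset (Fin m)).powerset, _| ≤ _ := Finset.abs_sum_le_sum_abs _ _
    _ ≤ ∑ t ∈ (Finset.univ : Finset (Fin m)).powerset, δ := Finset.sum_le_sum hb
    _ = 2^m * δ := by
        rw [Finset.sum_const, Finset.card_powerset, Finset.card_univ, Fintype.card_fin,
          nsmul_eq_mul]
        push_cast; ring


lemma integrable_bdd {α : Type*} [MeasurableSpace α] (μ : Measure α) [IsFiniteMeasure μ]
    {f : α → ℝ} (hf : AEStronglyMeasurable f μ) {C : ℝ} (hC : ∀ a, |f a| ≤ C) :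
    Integrable f μ :=
  Integrable.mono' (integrable_const C) hf
    (ae_of_all _ fun a => by simpa [Real.norm_eq_abs] using hC a)

lemma slice_swap {α β : Type*} [MeasurableSpace α] [MeasurableSpace β]
    (μ : Measure α) (ν : Measure β) [IsProbabilityMeasure μ] [IsProbabilityMeasure ν]
    {E : Set (α × β)} (hE : MeasurableSet E) :
    ∫ x, (ν (Prod.mk x ⁻¹' E)).toReal ∂μ
      = ∫ y, (μ ((fun x => (x, y)) ⁻¹' E)).toReal ∂ν := by
  rw [integral_toReal (measurable_measure_prodMk_left hE).aemeasurable
      (ae_of_all _ fun x => measure_lt_top ν _),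
    integral_toReal (measurable_measure_prodMk_right hE).aemeasurable
      (ae_of_all _ fun y => measure_lt_top μ _),
    ← Measure.prod_apply hE, ← Measure.prod_apply_symm hE]

lemma msLePair {α : Type*} [MeasurableSpace α] {f g : α → Fin m → ℝ}
    (hf : Measurable f) (hg : Measurable g) : MeasurableSet {a | f a ≤ g a} := by
  have : {a | f a ≤ g a} = ⋂ j, {a | f a j ≤ g a j} := by ext a; simp [Pi.le_def]
  rw [this]
  exact MeasurableSet.iInter fun j =>
    measurableSet_le ((measurable_pi_apply j).comp hf) ((measurable_pi_apply j).comp hg)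

lemma measurable_sup2 : Measurable fun p : (Fin m → ℝ) × (Fin m → ℝ) => p.1 ⊔ p.2 := by
  apply measurable_pi_lambda
  intro j
  have : (fun p : (Fin m → ℝ) × (Fin m → ℝ) => (p.1 ⊔ p.2) j)
      = fun p => max (p.1 j) (p.2 j) := by
    funext p; simp [Pi.sup_apply]
  rw [this]
  exact Measurable.max ((measurable_pi_apply j).comp measurable_fst)
    ((measurable_pi_apply j).comp measurable_snd)

lemma cdfm_mul_repr (ρ μ₁ μ₂ : Measure (Fin m → ℝ)) [IsProbabilityMeasure ρ]
    [IsProbabilityMeasure μ₁] [IsProbabilityMeasure μ₂] :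
    ∫ x, cdfm μ₁ x * cdfm μ₂ x ∂ρ
      = ∫ p, (ρ {x | p.1 ⊔ p.2 ≤ x}).toReal ∂(μ₁.prod μ₂) := by
  set E : Set ((Fin m → ℝ) × ((Fin m → ℝ) × (Fin m → ℝ))) :=
    {q | q.2.1 ≤ q.1 ∧ q.2.2 ≤ q.1} with hEdef
  have hE : MeasurableSet E := by
    refine MeasurableSet.inter ?_ ?_
    · exact msLePair (measurable_fst.comp measurable_snd) measurable_fst
    · exact msLePair (measurable_snd.comp measurable_snd) measurable_fst
  have h1 : ∀ x, cdfm μ₁ x * cdfm μ₂ x = ((μ₁.prod μ₂) (Prod.mk x ⁻¹' E)).toReal := by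
    intro x
    have hpre : Prod.mk x ⁻¹' E = {y : Fin m → ℝ | y ≤ x} ×ˢ {z : Fin m → ℝ | z ≤ x} := by
      ext p; simp [hEdef, Set.mem_prod]
    rw [hpre, Measure.prod_prod, ENNReal.toReal_mul]; rfl
  calc ∫ x, cdfm μ₁ x * cdfm μ₂ x ∂ρ
      = ∫ x, ((μ₁.prod μ₂) (Prod.mk x ⁻¹' E)).toReal ∂ρ :=
        integral_congr_ae (ae_of_all _ h1)
    _ = ∫ p, (ρ ((fun x => (x, p)) ⁻¹' E)).toReal ∂(μ₁.prod μ₂) := slice_swap ρ _ hE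
    _ = ∫ p, (ρ {x | p.1 ⊔ p.2 ≤ x}).toReal ∂(μ₁.prod μ₂) := by
        refine integral_congr_ae (ae_of_all _ fun p => ?_)
        have hset : ((fun x => (x, p)) ⁻¹' E) = {x | p.1 ⊔ p.2 ≤ x} := by
          ext x; simp [hEdef, sup_le_iff]
        simp only [hset]

lemma T_tendsto (νG : ℕ → Measure (Fin m → ℝ)) (hνG : ∀ n, IsProbabilityMeasure (νG n))
    (νGl : Measure (Fin m → ℝ)) [IsProbabilityMeasure νGl]
    (hGconv : TendstoUniformly (fun n => cdfm (νG n)) (cdfm νGl) atTop)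
    (μ₁ μ₂ : Measure (Fin m → ℝ)) [IsProbabilityMeasure μ₁] [IsProbabilityMeasure μ₂] :
    Tendsto (fun n => ∫ x, cdfm μ₁ x * cdfm μ₂ x ∂(νG n)) atTop
      (𝓝 (∫ x, cdfm μ₁ x * cdfm μ₂ x ∂νGl)) := by
  rw [Metric.tendsto_atTop]
  intro δ hδ
  have h2m : (0:ℝ) < 2^m := by positivity
  have hδ' : (0:ℝ) < δ / (2 * 2^m) := by positivity
  obtain ⟨N, hN⟩ := eventually_atTop.1 ((Metric.tendstoUniformly_iff.1 hGconv) (δ / (2 * 2^m)) hδ')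
  refine ⟨N, fun n hn => ?_⟩
  haveI := hνG n
  have hclose : ∀ t, |cdfm (νG n) t - cdfm νGl t| ≤ δ / (2 * 2^m) := by
    intro t
    have := hN n hn t
    rw [Real.dist_eq] at this
    rw [abs_sub_comm]
    exact le_of_lt this
  rw [Real.dist_eq, cdfm_mul_repr (νG n) μ₁ μ₂, cdfm_mul_repr νGl μ₁ μ₂]
  set σ := μ₁.prod μ₂
  haveI : IsProbabilityMeasure σ := by infer_instance
  have hint1 : Integrable (fun p : (Fin m → ℝ) × (Fin m → ℝ) =>
      ((νG n) {x | p.1 ⊔ p.2 ≤ x}).toReal) σ := by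
    refine integrable_bdd σ ((measurable_surv (νG n)).comp measurable_sup2).aestronglyMeasurable
      (C := 1) fun p => ?_
    rw [abs_of_nonneg ENNReal.toReal_nonneg]
    exact ENNReal.toReal_le_of_le_ofReal zero_le_one (by simpa using prob_le_one)
  have hint2 : Integrable (fun p : (Fin m → ℝ) × (Fin m → ℝ) =>
      (νGl {x | p.1 ⊔ p.2 ≤ x}).toReal) σ := by
    refine integrable_bdd σ ((measurable_surv νGl).comp measurable_sup2).aestronglyMeasurable
      (C := 1) fun p => ?_
    rw [abs_of_nonneg ENNReal.toReal_nonneg]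
    exact ENNReal.toReal_le_of_le_ofReal zero_le_one (by simpa using prob_le_one)
  rw [← integral_sub hint1 hint2]
  have hbnd : ∀ p : (Fin m → ℝ) × (Fin m → ℝ),
      ‖((νG n) {x | p.1 ⊔ p.2 ≤ x}).toReal - (νGl {x | p.1 ⊔ p.2 ≤ x}).toReal‖
        ≤ 2^m * (δ / (2 * 2^m)) := by
    intro p
    rw [Real.norm_eq_abs]
    exact surv_close (νG n) νGl hclose (p.1 ⊔ p.2)
  calc |∫ p, (((νG n) {x | p.1 ⊔ p.2 ≤ x}).toReal - (νGl {x | p.1 ⊔ p.2 ≤ x}).toReal) ∂σ|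
      ≤ 2^m * (δ / (2 * 2^m)) * (σ Set.univ).toReal := by
        exact norm_integral_le_of_norm_le_const (ae_of_all _ hbnd)
    _ < δ := by
        rw [measure_univ]
        simp only [ENNReal.toReal_one, mul_one]
        have hne : (2:ℝ)^m ≠ 0 := ne_of_gt h2m
        have heq : (2:ℝ)^m * (δ / (2 * 2^m)) = δ/2 := by field_simp
        rw [heq]
        linarith

lemma sq_expand (ρ μF νGl : Measure (Fin m → ℝ)) [IsProbabilityMeasure ρ]
    [IsProbabilityMeasure μF] [IsProbabilityMeasure νGl] :
    ∫ x, (cdfm μF x - cdfm νGl x)^2 ∂ρ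
      = ∫ x, cdfm μF x * cdfm μF x ∂ρ - 2 * ∫ x, cdfm μF x * cdfm νGl x ∂ρ
        + ∫ x, cdfm νGl x * cdfm νGl x ∂ρ := by
  have hb : ∀ (μ₁ μ₂ : Measure (Fin m → ℝ)), IsProbabilityMeasure μ₁ → IsProbabilityMeasure μ₂ →
      Integrable (fun x => cdfm μ₁ x * cdfm μ₂ x) ρ := by
    intro μ₁ μ₂ h₁ h₂
    refine integrable_bdd ρ ((measurable_cdfm μ₁).mul (measurable_cdfm μ₂)).aestronglyMeasurable
      (C := 1) fun x => ?_
    rw [abs_mul]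
    have b1 := cdfm_le_one μ₁ x; have b2 := cdfm_le_one μ₂ x
    have n1 := cdfm_nonneg μ₁ x; have n2 := cdfm_nonneg μ₂ x
    rw [abs_of_nonneg n1, abs_of_nonneg n2]
    nlinarith
  have h1 := hb μF μF inferInstance inferInstance
  have h2 := hb μF νGl inferInstance inferInstance
  have h3 := hb νGl νGl inferInstance inferInstance
  have h2' : Integrable (fun x => 2 * (cdfm μF x * cdfm νGl x)) ρ := h2.const_mul 2
  have hsub : Integrable (fun x => cdfm μF x * cdfm μF x - 2 * (cdfm μF x * cdfm νGl x)) ρ :=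
    h1.sub h2'
  rw [show (fun x => (cdfm μF x - cdfm νGl x)^2)
      = fun x => (cdfm μF x * cdfm μF x - 2*(cdfm μF x * cdfm νGl x))
          + cdfm νGl x * cdfm νGl x from funext fun x => by ring]
  rw [integral_add hsub h3, integral_sub h1 h2', MeasureTheory.integral_const_mul]

lemma I_tendsto (νG : ℕ → Measure (Fin m → ℝ)) (hνG : ∀ n, IsProbabilityMeasure (νG n))
    (νGl : Measure (Fin m → ℝ)) [IsProbabilityMeasure νGl]
    (hGconv : TendstoUniformly (fun n => cdfm (νG n)) (cdfm νGl) atTop)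
    (μF : Measure (Fin m → ℝ)) [IsProbabilityMeasure μF] :
    Tendsto (fun n => ∫ x, (cdfm μF x - cdfm νGl x)^2 ∂(νG n)) atTop
      (𝓝 (∫ x, (cdfm μF x - cdfm νGl x)^2 ∂νGl)) := by
  have e : ∀ n, ∫ x, (cdfm μF x - cdfm νGl x)^2 ∂(νG n)
      = ∫ x, cdfm μF x * cdfm μF x ∂(νG n) - 2 * ∫ x, cdfm μF x * cdfm νGl x ∂(νG n)
        + ∫ x, cdfm νGl x * cdfm νGl x ∂(νG n) := by
    intro n; haveI := hνG n; exact sq_expand (νG n) μF νGl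
  rw [sq_expand νGl μF νGl]
  have t1 := T_tendsto νG hνG νGl hGconv μF μF
  have t2 := T_tendsto νG hνG νGl hGconv μF νGl
  have t3 := T_tendsto νG hνG νGl hGconv νGl νGl
  have := (t1.sub (t2.const_mul 2)).add t3
  refine this.congr fun n => ?_
  rw [← e n]


lemma markov_sq {Ω : Type*} [MeasurableSpace Ω] (P : Measure Ω) [IsProbabilityMeasure P]
    {W : Ω → ℝ} (hint : Integrable (fun ω => W ω^2) P)
    {c b : ℝ} (hc : 0 < c) (hb : ∫ ω, W ω^2 ∂P ≤ b) :
    P {ω | c ≤ |W ω|} ≤ ENNReal.ofReal b / ENNReal.ofReal (c^2) := by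
  have hsub : {ω | c ≤ |W ω|} ⊆ {ω | ENNReal.ofReal (c^2) ≤ ENNReal.ofReal (W ω^2)} := by
    intro ω hω
    simp only [Set.mem_setOf_eq] at hω ⊢
    apply ENNReal.ofReal_le_ofReal
    calc c^2 ≤ |W ω|^2 := by nlinarith [abs_nonneg (W ω)]
      _ = W ω^2 := sq_abs _
  have hc2 : (0:ℝ) < c^2 := by positivity
  calc P {ω | c ≤ |W ω|} ≤ P {ω | ENNReal.ofReal (c^2) ≤ ENNReal.ofReal (W ω^2)} :=
        measure_mono hsub
    _ ≤ (∫⁻ ω, ENNReal.ofReal (W ω^2) ∂P) / ENNReal.ofReal (c^2) :=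
        meas_ge_le_lintegral_div (hint.aemeasurable.ennreal_ofReal)
          (ne_of_gt (ENNReal.ofReal_pos.2 hc2)) ENNReal.ofReal_ne_top
    _ ≤ ENNReal.ofReal b / ENNReal.ofReal (c^2) := by
        apply ENNReal.div_le_div_right
        rw [← ofReal_integral_eq_lintegral_ofReal hint (ae_of_all _ fun ω => sq_nonneg _)]
        exact ENNReal.ofReal_le_ofReal hb

section Var

variable {Ω : Type*} [MeasurableSpace Ω] (P : Measure Ω) [IsProbabilityMeasure P]
  (X : ℕ → Ω → Fin m → ℝ)

lemma lawOf_prob (hXmeas : ∀ i, Measurable (X i)) (i : ℕ) :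
    IsProbabilityMeasure (lawOf P X i) :=
  Measure.isProbabilityMeasure_map (hXmeas i).aemeasurable

lemma varBound (hXmeas : ∀ i, Measurable (X i))
    (hXindep : iIndepFun X P)
    (αw : ℕ → ℕ → ℝ) (hαnn : ∀ n, ∀ i ∈ Finset.Icc 1 n, 0 ≤ αw n i)
    (n : ℕ) (x : Fin m → ℝ) :
    ∫ ω, (empCDF αw X n ω x - mixCDF P αw X n x)^2 ∂P
      ≤ ∑ i ∈ Finset.Icc 1 n, (αw n i)^2 := by
  classical
  set s := Finset.Icc 1 n with hs
  set A : Set (Fin m → ℝ) := {y | y ≤ x} with hA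
  have hAm : MeasurableSet A := msLe x
  set φ : ℕ → (Fin m → ℝ) → ℝ :=
    fun i u => αw n i * (A.indicator (fun _ => (1:ℝ)) u - cdfm (lawOf P X i) x) with hφ
  set Y : ℕ → Ω → ℝ := fun i ω => φ i (X i ω) with hY
  have hφmeas : ∀ i, Measurable (φ i) := by
    intro i
    exact (((measurable_const (a := (1:ℝ))).indicator hAm).sub measurable_const).const_mul _
  have hYmeas : ∀ i, Measurable (Y i) := fun i => (hφmeas i).comp (hXmeas i)
  have hprob : ∀ i, IsProbabilityMeasure (lawOf P X i) := lawOf_prob P X hXmeas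
  have hInd01 : ∀ u, 0 ≤ A.indicator (fun _ => (1:ℝ)) u ∧ A.indicator (fun _ => (1:ℝ)) u ≤ 1 := by
    intro u
    rw [Set.indicator_apply]
    by_cases h : u ∈ A <;> simp [h]
  have hp01 : ∀ i, 0 ≤ cdfm (lawOf P X i) x ∧ cdfm (lawOf P X i) x ≤ 1 := by
    intro i
    haveI := hprob i
    exact ⟨cdfm_nonneg _ x, cdfm_le_one _ x⟩
  have hYbdd : ∀ i ω, |Y i ω| ≤ |αw n i| := by
    intro i ω
    rw [hY, hφ]
    simp only
    rw [abs_mul]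
    have h1 := hInd01 (X i ω)
    have h2 := hp01 i
    have : |A.indicator (fun _ => (1:ℝ)) (X i ω) - cdfm (lawOf P X i) x| ≤ 1 := by
      rw [abs_le]; constructor <;> linarith [h1.1, h1.2, h2.1, h2.2]
    nlinarith [abs_nonneg (αw n i)]
  have hYint : ∀ i, Integrable (Y i) P := fun i =>
    integrable_bdd P (hYmeas i).aestronglyMeasurable (hYbdd i)
  have hYYint : ∀ i j, Integrable (fun ω => Y i ω * Y j ω) P := by
    intro i j
    refine integrable_bdd P ((hYmeas i).mul (hYmeas j)).aestronglyMeasurable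
      (C := |αw n i| * |αw n j|) fun ω => ?_
    rw [abs_mul]
    exact mul_le_mul (hYbdd i ω) (hYbdd j ω) (abs_nonneg _) (abs_nonneg _)
  have hEZ : ∀ i, ∫ ω, A.indicator (fun _ => (1:ℝ)) (X i ω) ∂P = cdfm (lawOf P X i) x := by
    intro i
    have h1 : ∫ ω, A.indicator (fun _ => (1:ℝ)) (X i ω) ∂P
        = ∫ u, A.indicator (fun _ => (1:ℝ)) u ∂(Measure.map (X i) P) := by
      rw [integral_map (hXmeas i).aemeasurable
        ((measurable_const (a := (1:ℝ))).indicator hAm).aestronglyMeasurable]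
    rw [h1, int_ind _ hAm]
    rfl
  have hEY : ∀ i, ∫ ω, Y i ω ∂P = 0 := by
    intro i
    have hm1 : Measurable fun ω => A.indicator (fun _ => (1:ℝ)) (X i ω) :=
      ((measurable_const (a := (1:ℝ))).indicator hAm).comp (hXmeas i)
    have hint1 : Integrable (fun ω => A.indicator (fun _ => (1:ℝ)) (X i ω)) P :=
      integrable_bdd P hm1.aestronglyMeasurable (C := 1) (fun ω => by
        have := hInd01 (X i ω); rw [abs_le]
        exact ⟨by linarith [this.1], this.2⟩)
    have heq : ∫ ω, Y i ω ∂P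
        = αw n i * ((∫ ω, A.indicator (fun _ => (1:ℝ)) (X i ω) ∂P) - cdfm (lawOf P X i) x) := by
      rw [hY, hφ]
      simp only
      rw [integral_const_mul, integral_sub hint1 (integrable_const _), integral_const]
      simp
    rw [heq, hEZ i]
    simp
  have hzero : ∀ i j, i ≠ j → ∫ ω, Y i ω * Y j ω ∂P = 0 := by
    intro i j hij
    have hind : IndepFun (Y i) (Y j) P :=
      (hXindep.indepFun hij).comp (hφmeas i) (hφmeas j)
    have := hind.integral_mul_eq_mul_integral (hYint i).aestronglyMeasurable (hYint j).aestronglyMeasurable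
    have heq : ∫ ω, Y i ω * Y j ω ∂P = (∫ ω, Y i ω ∂P) * ∫ ω, Y j ω ∂P := this
    rw [heq, hEY i, hEY j, mul_zero]
  have hrepr : ∀ ω, empCDF αw X n ω x - mixCDF P αw X n x = ∑ i ∈ s, Y i ω := by
    intro ω
    rw [empCDF, mixCDF, ← Finset.sum_sub_distrib]
    refine Finset.sum_congr rfl fun i _ => ?_
    rw [hY, hφ]
    ring
  calc ∫ ω, (empCDF αw X n ω x - mixCDF P αw X n x)^2 ∂P
      = ∫ ω, ∑ i ∈ s, ∑ j ∈ s, Y i ω * Y j ω ∂P := by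
        refine integral_congr_ae (ae_of_all _ fun ω => ?_)
        show (empCDF αw X n ω x - mixCDF P αw X n x)^2 = ∑ i ∈ s, ∑ j ∈ s, Y i ω * Y j ω
        rw [hrepr ω, pow_two, Finset.sum_mul_sum]
    _ = ∑ i ∈ s, ∑ j ∈ s, ∫ ω, Y i ω * Y j ω ∂P := by
        rw [integral_finset_sum s (fun i _ => integrable_finset_sum s (fun j _ => hYYint i j))]
        exact Finset.sum_congr rfl fun i _ =>
          integral_finset_sum s (fun j _ => hYYint i j)
    _ = ∑ i ∈ s, ∫ ω, Y i ω * Y i ω ∂P := by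
        refine Finset.sum_congr rfl fun i hi => ?_
        rw [Finset.sum_eq_single i (fun j _ hji => hzero i j (Ne.symm hji)) (fun h => absurd hi h)]
    _ ≤ ∑ i ∈ s, (αw n i)^2 := by
        refine Finset.sum_le_sum fun i hi => ?_
        have hb : ∀ ω, Y i ω * Y i ω ≤ (αw n i)^2 := by
          intro ω
          have := hYbdd i ω
          have h2 : Y i ω * Y i ω = |Y i ω|^2 := by rw [sq_abs]; ring
          rw [h2, pow_two]
          have han : |αw n i| = αw n i := abs_of_nonneg (hαnn n i hi)
          nlinarith [abs_nonneg (Y i ω)]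
        calc ∫ ω, Y i ω * Y i ω ∂P ≤ ∫ _ω, (αw n i)^2 ∂P :=
              integral_mono (hYYint i i) (integrable_const _) hb
          _ = (αw n i)^2 := by simp

end Var


section Weights
variable (αw : ℕ → ℕ → ℝ)

lemma alpha_le_biSup (hαnn : ∀ n, ∀ i ∈ Finset.Icc 1 n, 0 ≤ αw n i)
    (hsum : ∀ n, 1 ≤ n → ∑ i ∈ Finset.Icc 1 n, αw n i = 1)
    {n i : ℕ} (hn : 1 ≤ n) (hi : i ∈ Finset.Icc 1 n) :
    αw n i ≤ ⨆ j ∈ Finset.Icc 1 n, αw n j := by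
  have hle1 : ∀ j ∈ Finset.Icc 1 n, αw n j ≤ 1 := fun j hj =>
    (Finset.single_le_sum (fun k hk => hαnn n k hk) hj).trans (le_of_eq (hsum n hn))
  have hbdd : BddAbove (Set.range fun j => ⨆ _ : j ∈ Finset.Icc 1 n, αw n j) := by
    refine ⟨1, ?_⟩
    rintro y ⟨j, rfl⟩
    show (⨆ _ : j ∈ Finset.Icc 1 n, αw n j) ≤ 1
    by_cases hj : j ∈ Finset.Icc 1 n
    · haveI : Nonempty (j ∈ Finset.Icc 1 n) := ⟨hj⟩
      rw [ciSup_const]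
      exact hle1 j hj
    · haveI : IsEmpty (j ∈ Finset.Icc 1 n) := ⟨hj⟩
      rw [Real.iSup_of_isEmpty]
      exact zero_le_one
  calc αw n i = ⨆ _ : i ∈ Finset.Icc 1 n, αw n i := by
        haveI : Nonempty (i ∈ Finset.Icc 1 n) := ⟨hi⟩
        rw [ciSup_const]
    _ ≤ ⨆ j ∈ Finset.Icc 1 n, αw n j := le_ciSup hbdd i

lemma biSup_nonneg (hαnn : ∀ n, ∀ i ∈ Finset.Icc 1 n, 0 ≤ αw n i)
    (hsum : ∀ n, 1 ≤ n → ∑ i ∈ Finset.Icc 1 n, αw n i = 1)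
    {n : ℕ} (hn : 1 ≤ n) : 0 ≤ ⨆ j ∈ Finset.Icc 1 n, αw n j := by
  have h1 : (1:ℕ) ∈ Finset.Icc 1 n := by simp [hn]
  exact le_trans (hαnn n 1 h1) (alpha_le_biSup αw hαnn hsum hn h1)

lemma msup_tendsto (hαnn : ∀ n, ∀ i ∈ Finset.Icc 1 n, 0 ≤ αw n i)
    (hsum : ∀ n, 1 ≤ n → ∑ i ∈ Finset.Icc 1 n, αw n i = 1)
    (hroot : Tendsto (fun n : ℕ => Real.sqrt n * ⨆ i ∈ Finset.Icc 1 n, αw n i) atTop (𝓝 0)) :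
    Tendsto (fun n : ℕ => ⨆ i ∈ Finset.Icc 1 n, αw n i) atTop (𝓝 0) := by
  refine tendsto_of_tendsto_of_tendsto_of_le_of_le' tendsto_const_nhds hroot ?_ ?_
  · filter_upwards [eventually_ge_atTop 1] with n hn
    exact biSup_nonneg αw hαnn hsum hn
  · filter_upwards [eventually_ge_atTop 1] with n hn
    have h1 : (1:ℝ) ≤ Real.sqrt n := by
      rw [show (1:ℝ) = Real.sqrt 1 by simp]
      exact Real.sqrt_le_sqrt (by exact_mod_cast hn)
    have h0 := biSup_nonneg αw hαnn hsum hn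
    nlinarith

lemma s2_tendsto {κ : ℝ}
    (hκ : Tendsto (fun n : ℕ => (n : ℝ) * ∑ i ∈ Finset.Icc 1 n, (αw n i) ^ 2) atTop (𝓝 κ)) :
    Tendsto (fun n : ℕ => ∑ i ∈ Finset.Icc 1 n, (αw n i) ^ 2) atTop (𝓝 0) := by
  have h := tendsto_inv_atTop_nhds_zero_nat.mul hκ
  rw [zero_mul] at h
  refine h.congr' ?_
  filter_upwards [eventually_ge_atTop 1] with n hn
  have hne : (n:ℝ) ≠ 0 := by positivity
  field_simp

end Weights

section Mix
variable {Ω : Type*} [MeasurableSpace Ω] (P : Measure Ω) [IsProbabilityMeasure P]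
  (X : ℕ → Ω → Fin m → ℝ) (αw : ℕ → ℕ → ℝ)

lemma mixCDF_bounds (hXmeas : ∀ i, Measurable (X i))
    (hαnn : ∀ n, ∀ i ∈ Finset.Icc 1 n, 0 ≤ αw n i) (n : ℕ) (x : Fin m → ℝ) :
    0 ≤ mixCDF P αw X n x ∧ mixCDF P αw X n x ≤ ∑ i ∈ Finset.Icc 1 n, αw n i := by
  constructor
  · refine Finset.sum_nonneg fun i hi => mul_nonneg (hαnn n i hi) ?_
    haveI := lawOf_prob P X hXmeas i
    exact cdfm_nonneg _ x
  · refine Finset.sum_le_sum fun i hi => ?_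
    haveI := lawOf_prob P X hXmeas i
    calc αw n i * cdfm (lawOf P X i) x ≤ αw n i * 1 :=
          mul_le_mul_of_nonneg_left (cdfm_le_one _ x) (hαnn n i hi)
      _ = αw n i := mul_one _

lemma empCDF_bounds (hαnn : ∀ n, ∀ i ∈ Finset.Icc 1 n, 0 ≤ αw n i) (n : ℕ) (ω : Ω)
    (x : Fin m → ℝ) :
    0 ≤ empCDF αw X n ω x ∧ empCDF αw X n ω x ≤ ∑ i ∈ Finset.Icc 1 n, αw n i := by
  classical
  have hind : ∀ i, 0 ≤ Set.indicator {y : Fin m → ℝ | y ≤ x} (fun _ => (1:ℝ)) (X i ω)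
      ∧ Set.indicator {y : Fin m → ℝ | y ≤ x} (fun _ => (1:ℝ)) (X i ω) ≤ 1 := by
    intro i
    rw [Set.indicator_apply]
    by_cases h : X i ω ∈ {y : Fin m → ℝ | y ≤ x} <;> simp [h]
  constructor
  · exact Finset.sum_nonneg fun i hi => mul_nonneg (hαnn n i hi) (hind i).1
  · refine Finset.sum_le_sum fun i hi => ?_
    calc αw n i * Set.indicator {y : Fin m → ℝ | y ≤ x} (fun _ => (1:ℝ)) (X i ω)
        ≤ αw n i * 1 := mul_le_mul_of_nonneg_left (hind i).2 (hαnn n i hi)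
      _ = αw n i := mul_one _

lemma mix_unif (hXmeas : ∀ i, Measurable (X i))
    (hαnn : ∀ n, ∀ i ∈ Finset.Icc 1 n, 0 ≤ αw n i)
    (hsum : ∀ n, 1 ≤ n → ∑ i ∈ Finset.Icc 1 n, αw n i = 1)
    (hmsup : Tendsto (fun n : ℕ => ⨆ i ∈ Finset.Icc 1 n, αw n i) atTop (𝓝 0))
    (F : (Fin m → ℝ) → ℝ) (hF01 : ∀ x, 0 ≤ F x ∧ F x ≤ 1)
    (hFconv : TendstoUniformly (fun i => cdfm (lawOf P X i)) F atTop)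
    {δ : ℝ} (hδ : 0 < δ) :
    ∀ᶠ n in atTop, ∀ x, |mixCDF P αw X n x - F x| ≤ δ := by
  obtain ⟨K, hK⟩ := eventually_atTop.1
    ((Metric.tendstoUniformly_iff.1 hFconv) (δ/2) (by linarith))
  have hδK : (0:ℝ) < δ / (4 * (K+1)) := by positivity
  have hN1 : ∀ᶠ n in atTop, |(⨆ i ∈ Finset.Icc 1 n, αw n i) - 0| < δ / (4 * (K+1)) := by
    obtain ⟨N, hN⟩ := Metric.tendsto_atTop.1 hmsup _ hδK
    exact eventually_atTop.2 ⟨N, fun n hn => by rw [← Real.dist_eq]; exact hN n hn⟩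
  filter_upwards [hN1, eventually_ge_atTop 1] with n hmsupn hn
  intro x
  set s := Finset.Icc 1 n with hs
  have hmsupn' : (⨆ i ∈ Finset.Icc 1 n, αw n i) ≤ δ / (4 * (K+1)) := by
    have := abs_lt.1 hmsupn
    linarith [this.2]
  have hrepr : mixCDF P αw X n x - F x = ∑ i ∈ s, αw n i * (cdfm (lawOf P X i) x - F x) := by
    have h2 : ∑ i ∈ s, αw n i * (cdfm (lawOf P X i) x - F x)
        = (∑ i ∈ s, αw n i * cdfm (lawOf P X i) x) - (∑ i ∈ s, αw n i) * F x := by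
      rw [Finset.sum_mul, ← Finset.sum_sub_distrib]
      exact Finset.sum_congr rfl fun i _ => by ring
    rw [h2, hsum n hn, one_mul, mixCDF]
  rw [hrepr]
  have habs : ∀ i ∈ s, |αw n i * (cdfm (lawOf P X i) x - F x)|
      = αw n i * |cdfm (lawOf P X i) x - F x| := by
    intro i hi
    rw [abs_mul, abs_of_nonneg (hαnn n i hi)]
  calc |∑ i ∈ s, αw n i * (cdfm (lawOf P X i) x - F x)|
      ≤ ∑ i ∈ s, |αw n i * (cdfm (lawOf P X i) x - F x)| := Finset.abs_sum_le_sum_abs _ _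
    _ = ∑ i ∈ s, αw n i * |cdfm (lawOf P X i) x - F x| := Finset.sum_congr rfl habs
    _ = (∑ i ∈ s.filter (· < K), αw n i * |cdfm (lawOf P X i) x - F x|)
        + ∑ i ∈ s.filter (¬ · < K), αw n i * |cdfm (lawOf P X i) x - F x| :=
        (Finset.sum_filter_add_sum_filter_not s _ _).symm
    _ ≤ δ/2 + δ/2 := by
        gcongr
        · calc ∑ i ∈ s.filter (· < K), αw n i * |cdfm (lawOf P X i) x - F x|
              ≤ ∑ _i ∈ s.filter (· < K), (⨆ j ∈ Finset.Icc 1 n, αw n j) * 2 := by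
                refine Finset.sum_le_sum fun i hi => ?_
                have hi' := Finset.mem_filter.1 hi
                have ha := alpha_le_biSup αw hαnn hsum hn hi'.1
                have hb : |cdfm (lawOf P X i) x - F x| ≤ 2 := by
                  haveI := lawOf_prob P X hXmeas i
                  have h1 := cdfm_nonneg (lawOf P X i) x
                  have h2 := cdfm_le_one (lawOf P X i) x
                  have h3 := (hF01 x).1
                  have h4 := (hF01 x).2
                  rw [abs_le]; constructor <;> linarith
                have hnn := hαnn n i hi'.1
                exact mul_le_mul ha hb (abs_nonneg _) (le_trans hnn ha)
            _ = (s.filter (· < K)).card * ((⨆ j ∈ Finset.Icc 1 n, αw n j) * 2) := by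
                rw [Finset.sum_const, nsmul_eq_mul]
            _ ≤ K * ((δ / (4 * (K+1))) * 2) := by
                have hcard : (s.filter (· < K)).card ≤ K := by
                  have hsub : s.filter (· < K) ⊆ Finset.range K := by
                    intro i hi
                    exact Finset.mem_range.2 (Finset.mem_filter.1 hi).2
                  calc (s.filter (· < K)).card ≤ (Finset.range K).card :=
                        Finset.card_le_card hsub
                    _ = K := Finset.card_range K
                have hb0 := biSup_nonneg αw hαnn hsum hn
                have : ((s.filter (· < K)).card : ℝ) ≤ (K:ℝ) := by exact_mod_cast hcard
                have h2' : (0:ℝ) ≤ (⨆ j ∈ Finset.Icc 1 n, αw n j) * 2 := by linarith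
                refine mul_le_mul this ?_ h2' (by positivity)
                nlinarith
            _ ≤ δ/2 := by
                rw [show (K:ℝ) * (δ / (4 * (K+1)) * 2) = (K * δ) / (2*(K+1)) by field_simp; ring]
                rw [div_le_iff₀ (by positivity)]
                nlinarith [hδ.le]
        · calc ∑ i ∈ s.filter (¬ · < K), αw n i * |cdfm (lawOf P X i) x - F x|
              ≤ ∑ i ∈ s.filter (¬ · < K), αw n i * (δ/2) := by
                refine Finset.sum_le_sum fun i hi => ?_
                have hi' := Finset.mem_filter.1 hi
                have hiK : K ≤ i := not_lt.1 hi'.2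
                have := hK i hiK x
                rw [Real.dist_eq, abs_sub_comm] at this
                exact mul_le_mul_of_nonneg_left this.le (hαnn n i hi'.1)
            _ ≤ ∑ i ∈ s, αw n i * (δ/2) := by
                refine Finset.sum_le_sum_of_subset_of_nonneg (Finset.filter_subset _ _)
                  fun i hi _ => mul_nonneg (hαnn n i hi) (by linarith)
            _ = δ/2 := by
                rw [← Finset.sum_mul, hsum n hn, one_mul]
    _ ≤ δ := by linarith

end Mix

lemma pt_ineq {a b θ : ℝ} (hθ : 0 < θ) (ha : |a| ≤ 1) : a^2 - θ - b^2/θ ≤ (a+b)^2 := by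
  have hb : 2*|b| ≤ θ + b^2/θ := by
    rw [← sub_nonneg]
    have hbb : (θ - |b|)^2 = θ^2 - 2*θ*|b| + b^2 := by rw [sub_sq, sq_abs]
    have h1 : θ + b^2/θ - 2*|b| = (θ - |b|)^2/θ := by
      rw [hbb]; field_simp; ring
    rw [h1]
    positivity
  have h2 : -(a*b) ≤ |b| := by
    have h3 : |a*b| ≤ |b| := by
      rw [abs_mul]
      calc |a| * |b| ≤ 1 * |b| := mul_le_mul_of_nonneg_right ha (abs_nonneg b)
        _ = |b| := one_mul _
    linarith [neg_le_abs (a*b)]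
  have hexp : (a+b)^2 = a^2 + 2*(a*b) + b^2 := by ring
  linarith [sq_nonneg b, hexp, hb, h2]

lemma prob_tendsto_one {Ω : Type*} [MeasurableSpace Ω] (P : Measure Ω) [IsProbabilityMeasure P]
    (good bad : ℕ → Set Ω) (hsub : ∀ᶠ n in atTop, (bad n)ᶜ ⊆ good n)
    (hbad : Tendsto (fun n => P (bad n)) atTop (𝓝 0)) :
    Tendsto (fun n => P (good n)) atTop (𝓝 1) := by
  have hup : ∀ n, P (good n) ≤ 1 := fun n => prob_le_one
  have hlow : ∀ᶠ n in atTop, 1 - P (bad n) ≤ P (good n) := by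
    filter_upwards [hsub] with n hn
    have hsub2 : (good n)ᶜ ⊆ bad n := by
      intro ω hω
      by_contra hb
      exact hω (hn hb)
    have h2 : (1:ℝ≥0∞) ≤ P (good n) + P (bad n) := by
      calc (1:ℝ≥0∞) = P Set.univ := measure_univ.symm
        _ = P (good n ∪ (good n)ᶜ) := by rw [Set.union_compl_self]
        _ ≤ P (good n) + P ((good n)ᶜ) := measure_union_le _ _
        _ ≤ P (good n) + P (bad n) := add_le_add le_rfl (measure_mono hsub2)
    exact tsub_le_iff_right.2 h2
  have h1 : Tendsto (fun n => 1 - P (bad n)) atTop (𝓝 1) := by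
    have := ENNReal.Tendsto.sub (tendsto_const_nhds (x := (1:ℝ≥0∞))) hbad (Or.inl ENNReal.one_ne_top)
    simpa using this
  exact tendsto_of_tendsto_of_tendsto_of_le_of_le' h1 tendsto_const_nhds hlow
    (Filter.Eventually.of_forall hup)

section Joint
variable {Ω : Type*} [MeasurableSpace Ω] (P : Measure Ω) [IsProbabilityMeasure P]
  (X : ℕ → Ω → Fin m → ℝ) (αw : ℕ → ℕ → ℝ)

lemma measurable_mixCDF (hXmeas : ∀ i, Measurable (X i)) (n : ℕ) :
    Measurable (mixCDF P αw X n) := by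
  show Measurable fun x => ∑ i ∈ Finset.Icc 1 n, αw n i * cdfm (lawOf P X i) x
  apply Finset.measurable_sum
  intro i _
  haveI := lawOf_prob P X hXmeas i
  exact (measurable_cdfm _).const_mul _

lemma measurable_diff_joint (hXmeas : ∀ i, Measurable (X i)) (n : ℕ) :
    Measurable (fun q : Ω × (Fin m → ℝ) =>
      empCDF αw X n q.1 q.2 - mixCDF P αw X n q.2) := by
  classical
  have h1 : ∀ i : ℕ, Measurable (fun q : Ω × (Fin m → ℝ) =>
      Set.indicator {y : Fin m → ℝ | y ≤ q.2} (fun _ => (1:ℝ)) (X i q.1)) := by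
    intro i
    have heq : (fun q : Ω × (Fin m → ℝ) =>
        Set.indicator {y : Fin m → ℝ | y ≤ q.2} (fun _ => (1:ℝ)) (X i q.1))
        = fun q => Set.indicator {p : (Fin m → ℝ) × (Fin m → ℝ) | p.1 ≤ p.2}
            (fun _ => (1:ℝ)) (X i q.1, q.2) := by
      funext q
      by_cases h : X i q.1 ≤ q.2
      · rw [Set.indicator_of_mem (show X i q.1 ∈ {y : Fin m → ℝ | y ≤ q.2} from h),
          Set.indicator_of_mem
            (show (X i q.1, q.2) ∈ {p : (Fin m → ℝ) × (Fin m → ℝ) | p.1 ≤ p.2} from h)]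
      · rw [Set.indicator_of_notMem
            (show X i q.1 ∉ {y : Fin m → ℝ | y ≤ q.2} from h),
          Set.indicator_of_notMem
            (show (X i q.1, q.2) ∉ {p : (Fin m → ℝ) × (Fin m → ℝ) | p.1 ≤ p.2} from h)]
    rw [heq]
    exact ((measurable_const (a := (1:ℝ))).indicator msLe2').comp
      (((hXmeas i).comp measurable_fst).prodMk measurable_snd)
  have hemp : Measurable (fun q : Ω × (Fin m → ℝ) => empCDF αw X n q.1 q.2) := by
    show Measurable fun q : Ω × (Fin m → ℝ) => ∑ i ∈ Finset.Icc 1 n, αw n i *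
      Set.indicator {y : Fin m → ℝ | y ≤ q.2} (fun _ => (1:ℝ)) (X i q.1)
    exact Finset.measurable_sum _ fun i _ => ((h1 i).const_mul _)
  exact hemp.sub ((measurable_mixCDF P X αw hXmeas n).comp measurable_snd)

lemma EV_markov (hXmeas : ∀ i, Measurable (X i))
    (hXindep : iIndepFun X P)
    (hαnn : ∀ n, ∀ i ∈ Finset.Icc 1 n, 0 ≤ αw n i) (n : ℕ)
    (ν : Measure (Fin m → ℝ)) [IsProbabilityMeasure ν] {c : ℝ} (hc : 0 < c) :
    P {ω | c ≤ ∫ x, (empCDF αw X n ω x - mixCDF P αw X n x)^2 ∂ν}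
      ≤ ENNReal.ofReal (∑ i ∈ Finset.Icc 1 n, (αw n i)^2) / ENNReal.ofReal c := by
  set a := ∑ i ∈ Finset.Icc 1 n, αw n i with ha
  set D : Ω × (Fin m → ℝ) → ℝ :=
    fun q => empCDF αw X n q.1 q.2 - mixCDF P αw X n q.2 with hD
  have hDm : Measurable D := measurable_diff_joint P X αw hXmeas n
  have hDb : ∀ q, |D q| ≤ a := by
    intro q
    have h1 := empCDF_bounds X αw hαnn n q.1 q.2
    have h2 := mixCDF_bounds P X αw hXmeas hαnn n q.2
    rw [← ha] at h1 h2
    show |empCDF αw X n q.1 q.2 - mixCDF P αw X n q.2| ≤ a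
    rw [abs_le]
    constructor <;> linarith [h1.1, h1.2, h2.1, h2.2]
  have hDb2 : ∀ q, |(D q)^2| ≤ a^2 := by
    intro q
    rw [abs_of_nonneg (sq_nonneg _)]
    have := hDb q
    nlinarith [abs_nonneg (D q), sq_abs (D q)]
  set g : Ω × (Fin m → ℝ) → ℝ≥0∞ := fun q => ENNReal.ofReal ((D q)^2) with hg
  have hgm : Measurable g := (hDm.pow_const 2).ennreal_ofReal
  have hVt : ∀ ω, ENNReal.ofReal (∫ x, (D (ω, x))^2 ∂ν) = ∫⁻ x, g (ω, x) ∂ν := by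
    intro ω
    exact ofReal_integral_eq_lintegral_ofReal
      (integrable_bdd ν ((hDm.comp measurable_prodMk_left).pow_const 2).aestronglyMeasurable
        (fun x => hDb2 (ω, x)))
      (ae_of_all _ fun x => sq_nonneg _)
  have hsub : {ω | c ≤ ∫ x, (empCDF αw X n ω x - mixCDF P αw X n x)^2 ∂ν}
      ⊆ {ω | ENNReal.ofReal c ≤ ∫⁻ x, g (ω, x) ∂ν} := by
    intro ω hω
    simp only [Set.mem_setOf_eq] at hω ⊢
    rw [← hVt ω]
    exact ENNReal.ofReal_le_ofReal hω
  have hmeasV : Measurable fun ω => ∫⁻ x, g (ω, x) ∂ν := hgm.lintegral_prod_right'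
  have hswap : ∫⁻ ω, ∫⁻ x, g (ω, x) ∂ν ∂P = ∫⁻ x, ∫⁻ ω, g (ω, x) ∂P ∂ν :=
    lintegral_lintegral_swap hgm.aemeasurable
  have hinner : ∀ x, ∫⁻ ω, g (ω, x) ∂P
      ≤ ENNReal.ofReal (∑ i ∈ Finset.Icc 1 n, (αw n i)^2) := by
    intro x
    have hint : Integrable (fun ω => (D (ω, x))^2) P :=
      integrable_bdd P ((hDm.comp measurable_prodMk_right).pow_const 2).aestronglyMeasurable
        (fun ω => hDb2 (ω, x))
    have h1 : ∫⁻ ω, g (ω, x) ∂P = ENNReal.ofReal (∫ ω, (D (ω, x))^2 ∂P) :=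
      (ofReal_integral_eq_lintegral_ofReal hint (ae_of_all _ fun ω => sq_nonneg _)).symm
    rw [h1]
    exact ENNReal.ofReal_le_ofReal (varBound P X hXmeas hXindep αw hαnn n x)
  calc P {ω | c ≤ ∫ x, (empCDF αw X n ω x - mixCDF P αw X n x)^2 ∂ν}
      ≤ P {ω | ENNReal.ofReal c ≤ ∫⁻ x, g (ω, x) ∂ν} := measure_mono hsub
    _ ≤ (∫⁻ ω, ∫⁻ x, g (ω, x) ∂ν ∂P) / ENNReal.ofReal c :=
        meas_ge_le_lintegral_div hmeasV.aemeasurable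
          (ne_of_gt (ENNReal.ofReal_pos.2 hc)) ENNReal.ofReal_ne_top
    _ ≤ ENNReal.ofReal (∑ i ∈ Finset.Icc 1 n, (αw n i)^2) / ENNReal.ofReal c := by
        apply ENNReal.div_le_div_right
        rw [hswap]
        calc ∫⁻ x, ∫⁻ ω, g (ω, x) ∂P ∂ν
            ≤ ∫⁻ _x, ENNReal.ofReal (∑ i ∈ Finset.Icc 1 n, (αw n i)^2) ∂ν :=
              lintegral_mono fun x => hinner x
          _ = ENNReal.ofReal (∑ i ∈ Finset.Icc 1 n, (αw n i)^2) := by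
              rw [lintegral_const, measure_univ, mul_one]

end Joint
end St7

/-- Theorem 3 of the paper: without any hypothesis relating `𝔽_n` and
`G_n`, `P(KS_n/√n ≥ sup_x |F(x) − G(x)| − ε + o_p(1)) → 1` and
`P(CvM_n/n ≥ ∫(F − G)² dG − ε + o_p(1)) → 1`. -/
theorem statement7 {m : ℕ} {Ω Ω' : Type*} [MeasurableSpace Ω] [MeasurableSpace Ω']
    (P : Measure Ω) [IsProbabilityMeasure P] (P' : Measure Ω') [IsProbabilityMeasure P']
    (X : ℕ → Ω → Fin m → ℝ) (hXmeas : ∀ i, Measurable (X i))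
    (hXindep : iIndepFun X P)
    (F : (Fin m → ℝ) → ℝ) (hF : IsCDF F) (hFuc : UniformContinuous F)
    (hFconv : TendstoUniformly (fun i => cdfm (lawOf P X i)) F atTop)
    (νG : ℕ → Measure (Fin m → ℝ)) (hνG : ∀ n, IsProbabilityMeasure (νG n))
    (νGl : Measure (Fin m → ℝ)) (hνGl : IsProbabilityMeasure νGl)
    (hGuc : UniformContinuous (cdfm νGl))
    (hGconv : TendstoUniformly (fun n => cdfm (νG n)) (cdfm νGl) atTop)
    (αw : ℕ → ℕ → ℝ) (κ : ℝ) (hα : WeightsOK αw κ) :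
    (∃ R : ℕ → Ω → ℝ, TendstoInMeasure P R atTop (fun _ => (0 : ℝ)) ∧
      ∀ ε > (0 : ℝ), Tendsto (fun n : ℕ =>
          P {ω | (⨆ x, |F x - cdfm νGl x|) - ε + R n ω ≤
              ⨆ x, |empCDF αw X n ω x - cdfm (νG n) x|})
        atTop (𝓝 (1 : ℝ≥0∞))) ∧
    (∃ R : ℕ → Ω → ℝ, TendstoInMeasure P R atTop (fun _ => (0 : ℝ)) ∧
      ∀ ε > (0 : ℝ), Tendsto (fun n : ℕ =>
          P {ω | (∫ x, (F x - cdfm νGl x) ^ 2 ∂νGl) - ε + R n ω ≤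
              ∫ x, (empCDF αw X n ω x - cdfm (νG n) x) ^ 2 ∂(νG n)})
        atTop (𝓝 (1 : ℝ≥0∞))) := by
  classical
  obtain ⟨hαnn, hsum, hroot, hκ, hκ1⟩ := hα
  obtain ⟨μF, hμFp, hFeq⟩ := hF
  haveI := hμFp
  subst hFeq
  have hmsup := St7.msup_tendsto αw hαnn hsum hroot
  have hs2 := St7.s2_tendsto αw hκ
  have hF01 : ∀ x, 0 ≤ cdfm μF x ∧ cdfm μF x ≤ 1 :=
    fun x => ⟨St7.cdfm_nonneg _ x, St7.cdfm_le_one _ x⟩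
  have hG01 : ∀ x, 0 ≤ cdfm νGl x ∧ cdfm νGl x ≤ 1 :=
    fun x => ⟨St7.cdfm_nonneg _ x, St7.cdfm_le_one _ x⟩
  have hGn01 : ∀ (n : ℕ) x, 0 ≤ cdfm (νG n) x ∧ cdfm (νG n) x ≤ 1 := by
    intro n x
    haveI := hνG n
    exact ⟨St7.cdfm_nonneg _ x, St7.cdfm_le_one _ x⟩
  have hR0 : TendstoInMeasure P (fun (_ : ℕ) (_ : Ω) => (0:ℝ)) atTop (fun _ => (0:ℝ)) := by
    intro δ hδ
    have hset : {ω : Ω | δ ≤ edist (0:ℝ) 0} = (∅ : Set Ω) := by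
      ext ω
      simp only [Set.mem_setOf_eq, edist_self, Set.mem_empty_iff_false, iff_false, not_le]
      exact hδ
    simp only [hset, measure_empty]
    exact tendsto_const_nhds
  have hcheb : ∀ (n : ℕ) (x0 : Fin m → ℝ) (c : ℝ), 0 < c →
      P {ω | c ≤ |empCDF αw X n ω x0 - mixCDF P αw X n x0|}
        ≤ ENNReal.ofReal (∑ i ∈ Finset.Icc 1 n, (αw n i)^2) / ENNReal.ofReal (c^2) := by
    intro n x0 c hc
    have hWm : Measurable fun ω => empCDF αw X n ω x0 - mixCDF P αw X n x0 := by
      have hpm : Measurable fun ω : Ω => (ω, x0) := measurable_prodMk_right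
      have h2 := (St7.measurable_diff_joint P X αw hXmeas n).comp hpm
      exact h2
    have hWb : ∀ ω, |(empCDF αw X n ω x0 - mixCDF P αw X n x0)^2|
        ≤ (∑ i ∈ Finset.Icc 1 n, αw n i)^2 := by
      intro ω
      have h1 := St7.empCDF_bounds X αw hαnn n ω x0
      have h2 := St7.mixCDF_bounds P X αw hXmeas hαnn n x0
      rw [abs_of_nonneg (sq_nonneg _)]
      nlinarith [h1.1, h1.2, h2.1, h2.2]
    have hint : Integrable (fun ω => (empCDF αw X n ω x0 - mixCDF P αw X n x0)^2) P :=
      St7.integrable_bdd P (hWm.pow_const 2).aestronglyMeasurable hWb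
    exact St7.markov_sq P hint hc (St7.varBound P X hXmeas hXindep αw hαnn n x0)
  have hzero : ∀ c : ℝ, 0 < c → Tendsto (fun n : ℕ =>
      ENNReal.ofReal (∑ i ∈ Finset.Icc 1 n, (αw n i)^2) / ENNReal.ofReal c) atTop (𝓝 0) := by
    intro c hc
    have h1 : Tendsto (fun n : ℕ => ENNReal.ofReal (∑ i ∈ Finset.Icc 1 n, (αw n i)^2))
        atTop (𝓝 0) := by
      have := ENNReal.tendsto_ofReal (f := atTop) hs2
      simpa using this
    have hbne : (ENNReal.ofReal c)⁻¹ ≠ ⊤ :=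
      ENNReal.inv_ne_top.2 (ne_of_gt (ENNReal.ofReal_pos.2 hc))
    have h2 := ENNReal.Tendsto.mul_const h1 (Or.inr hbne)
    simp only [div_eq_mul_inv]
    simpa using h2
  have hGevgen : ∀ δ : ℝ, 0 < δ → ∀ᶠ n in atTop, ∀ x, |cdfm (νG n) x - cdfm νGl x| ≤ δ := by
    intro δ hδ
    obtain ⟨N, hN⟩ := eventually_atTop.1
      ((Metric.tendstoUniformly_iff.1 hGconv) δ hδ)
    refine eventually_atTop.2 ⟨N, fun n hn x => ?_⟩
    have := hN n hn x
    rw [Real.dist_eq, abs_sub_comm] at this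
    exact this.le
  constructor
  · -- KS part
    refine ⟨fun _ _ => 0, hR0, ?_⟩
    intro ε hε
    obtain ⟨x0, hx0⟩ := exists_lt_of_lt_ciSup
      (show (⨆ x, |cdfm μF x - cdfm νGl x|) - ε/2 < ⨆ x, |cdfm μF x - cdfm νGl x| by linarith)
    have hHev := St7.mix_unif P X αw hXmeas hαnn hsum hmsup (cdfm μF) hF01 hFconv
      (show (0:ℝ) < ε/8 by linarith)
    refine St7.prob_tendsto_one P _
      (fun n => {ω | ε/8 ≤ |empCDF αw X n ω x0 - mixCDF P αw X n x0|}) ?_ ?_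
    · filter_upwards [hHev, hGevgen (ε/8) (by linarith), eventually_ge_atTop 1]
        with n hH hGn hn1
      intro ω hω
      have hωlt : |empCDF αw X n ω x0 - mixCDF P αw X n x0| < ε/8 := not_le.1 hω
      have hb1 := hH x0
      have hb2 := hGn x0
      have habs : |cdfm μF x0 - cdfm νGl x0|
          ≤ |empCDF αw X n ω x0 - cdfm (νG n) x0|
            + |empCDF αw X n ω x0 - mixCDF P αw X n x0|
            + |mixCDF P αw X n x0 - cdfm μF x0|
            + |cdfm (νG n) x0 - cdfm νGl x0| := by
        rw [abs_le]
        constructor <;>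
          linarith [le_abs_self (empCDF αw X n ω x0 - cdfm (νG n) x0),
            neg_abs_le (empCDF αw X n ω x0 - cdfm (νG n) x0),
            le_abs_self (empCDF αw X n ω x0 - mixCDF P αw X n x0),
            neg_abs_le (empCDF αw X n ω x0 - mixCDF P αw X n x0),
            le_abs_self (mixCDF P αw X n x0 - cdfm μF x0),
            neg_abs_le (mixCDF P αw X n x0 - cdfm μF x0),
            le_abs_self (cdfm (νG n) x0 - cdfm νGl x0),
            neg_abs_le (cdfm (νG n) x0 - cdfm νGl x0)]
      have hkey : (⨆ x, |cdfm μF x - cdfm νGl x|) - ε + (0:ℝ)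
          ≤ |empCDF αw X n ω x0 - cdfm (νG n) x0| := by
        linarith [habs, hb1, hb2, hωlt, hx0]
      have hbdd : BddAbove (Set.range fun x => |empCDF αw X n ω x - cdfm (νG n) x|) := by
        refine ⟨(∑ i ∈ Finset.Icc 1 n, αw n i) + 1, ?_⟩
        rintro y ⟨x, rfl⟩
        have h1 := St7.empCDF_bounds X αw hαnn n ω x
        have h2 := hGn01 n x
        exact abs_le.2 ⟨by linarith [h1.1, h1.2, h2.1, h2.2],
          by linarith [h1.1, h1.2, h2.1, h2.2]⟩
      exact le_trans hkey (le_ciSup hbdd x0)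
    · have hb : ∀ n, P {ω | ε/8 ≤ |empCDF αw X n ω x0 - mixCDF P αw X n x0|}
          ≤ ENNReal.ofReal (∑ i ∈ Finset.Icc 1 n, (αw n i)^2)
              / ENNReal.ofReal ((ε/8)^2) :=
        fun n => hcheb n x0 (ε/8) (by linarith)
      exact tendsto_of_tendsto_of_tendsto_of_le_of_le tendsto_const_nhds
        (hzero ((ε/8)^2) (by positivity)) (fun n => zero_le) hb
  · -- CvM part
    refine ⟨fun _ _ => 0, hR0, ?_⟩
    intro ε hε
    have hI := St7.I_tendsto νG hνG νGl hGconv μF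
    have hintSq : ∀ (n : ℕ) (f g : (Fin m → ℝ) → ℝ), Measurable f → Measurable g →
        (∀ x, |f x - g x| ≤ 2) → Integrable (fun x => (f x - g x)^2) (νG n) := by
      intro n f g hf hg hb
      haveI := hνG n
      refine St7.integrable_bdd (νG n) ((hf.sub hg).pow_const 2).aestronglyMeasurable
        (C := 4) fun x => ?_
      rw [abs_of_nonneg (sq_nonneg _)]
      nlinarith [hb x, abs_nonneg (f x - g x), sq_abs (f x - g x)]
    have hmF : Measurable (cdfm μF) := St7.measurable_cdfm _
    have hmGl : Measurable (cdfm νGl) := St7.measurable_cdfm _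
    have hDt : Tendsto (fun n => ∫ x, (mixCDF P αw X n x - cdfm (νG n) x)^2 ∂(νG n)) atTop
        (𝓝 (∫ x, (cdfm μF x - cdfm νGl x)^2 ∂νGl)) := by
      have hdiff : Tendsto (fun n => (∫ x, (mixCDF P αw X n x - cdfm (νG n) x)^2 ∂(νG n))
          - ∫ x, (cdfm μF x - cdfm νGl x)^2 ∂(νG n)) atTop (𝓝 0) := by
        rw [Metric.tendsto_atTop]
        intro δ hδ
        obtain ⟨N, hN⟩ := eventually_atTop.1
          ((St7.mix_unif P X αw hXmeas hαnn hsum hmsup (cdfm μF) hF01 hFconv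
              (show (0:ℝ) < δ/16 by linarith)).and
            ((hGevgen (δ/16) (by linarith)).and (eventually_ge_atTop 1)))
        refine ⟨N, fun n hn => ?_⟩
        obtain ⟨hHn, hGn, hn1⟩ := hN n hn
        haveI := hνG n
        have hmGn : Measurable (cdfm (νG n)) := St7.measurable_cdfm _
        have hm_mix := St7.measurable_mixCDF P X αw hXmeas n
        have hMb : ∀ x, 0 ≤ mixCDF P αw X n x ∧ mixCDF P αw X n x ≤ 1 := by
          intro x
          have h1 := St7.mixCDF_bounds P X αw hXmeas hαnn n x
          exact ⟨h1.1, le_trans h1.2 (le_of_eq (hsum n hn1))⟩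
        have hpb : ∀ x, ‖(mixCDF P αw X n x - cdfm (νG n) x)^2
            - (cdfm μF x - cdfm νGl x)^2‖ ≤ δ/2 := by
          intro x
          rw [Real.norm_eq_abs]
          have h1 := hMb x
          have h2 := hGn01 n x
          have h3 := hF01 x
          have h4 := hG01 x
          have h5 := hHn x
          have h6 := hGn x
          have hab : (mixCDF P αw X n x - cdfm (νG n) x)^2 - (cdfm μF x - cdfm νGl x)^2
              = ((mixCDF P αw X n x - cdfm μF x) + (cdfm νGl x - cdfm (νG n) x))
                * ((mixCDF P αw X n x - cdfm (νG n) x) + (cdfm μF x - cdfm νGl x)) := by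
            ring
          rw [hab, abs_mul]
          have hA : |(mixCDF P αw X n x - cdfm μF x) + (cdfm νGl x - cdfm (νG n) x)|
              ≤ δ/8 := by
            calc |(mixCDF P αw X n x - cdfm μF x) + (cdfm νGl x - cdfm (νG n) x)|
                ≤ |mixCDF P αw X n x - cdfm μF x| + |cdfm νGl x - cdfm (νG n) x| :=
                  abs_add_le _ _
              _ ≤ δ/16 + δ/16 := by
                  refine add_le_add h5 ?_
                  rw [abs_sub_comm]
                  exact h6
              _ = δ/8 := by ring
          have hB : |(mixCDF P αw X n x - cdfm (νG n) x) + (cdfm μF x - cdfm νGl x)|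
              ≤ 2 := by
            rw [abs_le]
            constructor <;> linarith [h1.1, h1.2, h2.1, h2.2, h3.1, h3.2, h4.1, h4.2]
          calc |(mixCDF P αw X n x - cdfm μF x) + (cdfm νGl x - cdfm (νG n) x)|
                * |(mixCDF P αw X n x - cdfm (νG n) x) + (cdfm μF x - cdfm νGl x)|
              ≤ (δ/8) * 2 := mul_le_mul hA hB (abs_nonneg _) (by linarith)
            _ ≤ δ/2 := by linarith
        have hintf : Integrable (fun x => (mixCDF P αw X n x - cdfm (νG n) x)^2) (νG n) := by
          refine hintSq n _ _ hm_mix hmGn fun x => ?_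
          have h1 := hMb x
          have h2 := hGn01 n x
          exact abs_le.2 ⟨by linarith [h1.1, h2.2], by linarith [h1.2, h2.1]⟩
        have hintg : Integrable (fun x => (cdfm μF x - cdfm νGl x)^2) (νG n) := by
          refine hintSq n _ _ hmF hmGl fun x => ?_
          have h3 := hF01 x
          have h4 := hG01 x
          exact abs_le.2 ⟨by linarith [h3.1, h4.2], by linarith [h3.2, h4.1]⟩
        rw [Real.dist_eq, sub_zero, ← integral_sub hintf hintg]
        calc |∫ x, ((mixCDF P αw X n x - cdfm (νG n) x)^2
              - (cdfm μF x - cdfm νGl x)^2) ∂(νG n)|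
            ≤ δ/2 * ((νG n) Set.univ).toReal :=
              norm_integral_le_of_norm_le_const (ae_of_all _ hpb)
          _ < δ := by
              rw [measure_univ]
              simp only [ENNReal.toReal_one, mul_one]
              linarith
      have hsumt := hdiff.add hI
      rw [zero_add] at hsumt
      refine hsumt.congr fun n => ?_
      ring
    refine St7.prob_tendsto_one P _
      (fun n => {ω | ε^2/32 ≤ ∫ x, (empCDF αw X n ω x - mixCDF P αw X n x)^2 ∂(νG n)}) ?_ ?_
    · have hDev : ∀ᶠ n in atTop,
          (∫ x, (cdfm μF x - cdfm νGl x)^2 ∂νGl) - ε/4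
            ≤ ∫ x, (mixCDF P αw X n x - cdfm (νG n) x)^2 ∂(νG n) :=
        hDt.eventually (eventually_ge_nhds (by linarith))
      filter_upwards [hDev, eventually_ge_atTop 1] with n hDn hn1
      intro ω hω
      haveI := hνG n
      have hV : ∫ x, (empCDF αw X n ω x - mixCDF P αw X n x)^2 ∂(νG n) < ε^2/32 :=
        not_le.1 hω
      have hmGn : Measurable (cdfm (νG n)) := St7.measurable_cdfm _
      have hm_mix := St7.measurable_mixCDF P X αw hXmeas n
      have hm_emp : Measurable fun x => empCDF αw X n ω x := by
        have hpm : Measurable fun x : Fin m → ℝ => (ω, x) := measurable_prodMk_left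
        have h : Measurable fun x => empCDF αw X n ω x - mixCDF P αw X n x := by
          have h2 := (St7.measurable_diff_joint P X αw hXmeas n).comp hpm
          exact h2
        have heq : (fun x => empCDF αw X n ω x)
            = fun x => (empCDF αw X n ω x - mixCDF P αw X n x) + mixCDF P αw X n x := by
          funext x; ring
        rw [heq]
        exact h.add hm_mix
      have hsum1 : ∑ i ∈ Finset.Icc 1 n, αw n i = 1 := hsum n hn1
      have hEb : ∀ x, 0 ≤ empCDF αw X n ω x ∧ empCDF αw X n ω x ≤ 1 := by
        intro x
        have h1 := St7.empCDF_bounds X αw hαnn n ω x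
        exact ⟨h1.1, le_trans h1.2 (le_of_eq hsum1)⟩
      have hMb : ∀ x, 0 ≤ mixCDF P αw X n x ∧ mixCDF P αw X n x ≤ 1 := by
        intro x
        have h1 := St7.mixCDF_bounds P X αw hXmeas hαnn n x
        exact ⟨h1.1, le_trans h1.2 (le_of_eq hsum1)⟩
      have hθ : (0:ℝ) < ε/4 := by linarith
      have hpt : ∀ x, (mixCDF P αw X n x - cdfm (νG n) x)^2 - ε/4
          - (empCDF αw X n ω x - mixCDF P αw X n x)^2/(ε/4)
          ≤ (empCDF αw X n ω x - cdfm (νG n) x)^2 := by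
        intro x
        have h2 := hGn01 n x
        have h1 := hMb x
        have ha : |mixCDF P αw X n x - cdfm (νG n) x| ≤ 1 :=
          abs_le.2 ⟨by linarith [h1.1, h2.2], by linarith [h1.2, h2.1]⟩
        have hp := St7.pt_ineq hθ ha (b := empCDF αw X n ω x - mixCDF P αw X n x)
        have hab : mixCDF P αw X n x - cdfm (νG n) x
            + (empCDF αw X n ω x - mixCDF P αw X n x)
            = empCDF αw X n ω x - cdfm (νG n) x := by ring
        rw [hab] at hp
        exact hp
      have hint1 : Integrable (fun x => (empCDF αw X n ω x - cdfm (νG n) x)^2) (νG n) := by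
        refine hintSq n _ _ hm_emp hmGn fun x => ?_
        have h1 := hEb x
        have h2 := hGn01 n x
        exact abs_le.2 ⟨by linarith [h1.1, h2.2], by linarith [h1.2, h2.1]⟩
      have hint2 : Integrable (fun x => (mixCDF P αw X n x - cdfm (νG n) x)^2) (νG n) := by
        refine hintSq n _ _ hm_mix hmGn fun x => ?_
        have h1 := hMb x
        have h2 := hGn01 n x
        exact abs_le.2 ⟨by linarith [h1.1, h2.2], by linarith [h1.2, h2.1]⟩
      have hint3 : Integrable (fun x => (empCDF αw X n ω x - mixCDF P αw X n x)^2) (νG n) := by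
        refine hintSq n _ _ hm_emp hm_mix fun x => ?_
        have h1 := hEb x
        have h2 := hMb x
        exact abs_le.2 ⟨by linarith [h1.1, h2.2], by linarith [h1.2, h2.1]⟩
      have hint4 : Integrable (fun x => (mixCDF P αw X n x - cdfm (νG n) x)^2 - ε/4
          - (empCDF αw X n ω x - mixCDF P αw X n x)^2/(ε/4)) (νG n) :=
        (hint2.sub (integrable_const _)).sub (hint3.div_const _)
      have hmono := integral_mono hint4 hint1 hpt
      have hLHS : ∫ x, ((mixCDF P αw X n x - cdfm (νG n) x)^2 - ε/4
          - (empCDF αw X n ω x - mixCDF P αw X n x)^2/(ε/4)) ∂(νG n)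
          = (∫ x, (mixCDF P αw X n x - cdfm (νG n) x)^2 ∂(νG n)) - ε/4
            - (∫ x, (empCDF αw X n ω x - mixCDF P αw X n x)^2 ∂(νG n))/(ε/4) := by
        have hint2' : Integrable
            (fun x => (mixCDF P αw X n x - cdfm (νG n) x)^2 - ε/4) (νG n) :=
          hint2.sub (integrable_const _)
        have hint3' : Integrable
            (fun x => (empCDF αw X n ω x - mixCDF P αw X n x)^2/(ε/4)) (νG n) :=
          hint3.div_const _
        rw [integral_sub hint2' hint3', integral_sub hint2 (integrable_const (ε/4)),
          integral_const]
        simp only [measure_univ, probReal_univ, ENNReal.toReal_one, smul_eq_mul, one_mul]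
        rw [integral_div]
      rw [hLHS] at hmono
      have hVd : (∫ x, (empCDF αw X n ω x - mixCDF P αw X n x)^2 ∂(νG n))/(ε/4) ≤ ε/8 := by
        rw [div_le_iff₀ hθ]
        nlinarith [hV]
      show (∫ x, (cdfm μF x - cdfm νGl x)^2 ∂νGl) - ε + (0:ℝ)
          ≤ ∫ x, (empCDF αw X n ω x - cdfm (νG n) x)^2 ∂(νG n)
      refine le_trans ?_ hmono
      linarith [hDn, hVd]
    · have hb : ∀ n, P {ω | ε^2/32 ≤ ∫ x, (empCDF αw X n ω x - mixCDF P αw X n x)^2 ∂(νG n)}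
          ≤ ENNReal.ofReal (∑ i ∈ Finset.Icc 1 n, (αw n i)^2)
              / ENNReal.ofReal (ε^2/32) := by
        intro n
        haveI := hνG n
        exact St7.EV_markov P X αw hXmeas hXindep hαnn n (νG n) (by positivity)
      exact tendsto_of_tendsto_of_tendsto_of_le_of_le tendsto_const_nhds
        (hzero (ε^2/32) (by positivity)) (fun n => zero_le) hb
end

section
/- Assume conditions (C1) and (C2) of the parametric goodness-of-fit model at a parameter ϑ ∈ Θ. Then for every sequence (ϑ_n) with ϑ_n ∈ Θ for all n and ϑ_n → ϑ, lim_{n→∞} sup_{x ∈ [-∞,∞]^m} | G_n(x, ϑ_n) − G(x, ϑ) | = 0. -/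
open MeasureTheory ProbabilityTheory Filter Topology
open scoped ENNReal NNReal

lemma projCLM_norm_le {d : ℕ} (v : Fin d → ℝ) : ‖projCLM v‖ ≤ d * ‖v‖ := by
  apply ContinuousLinearMap.opNorm_le_bound
  · positivity
  · intro w
    have h : projCLM v w = ∑ j, v j * w j := by
      simp [projCLM, ContinuousLinearMap.sum_apply]
    rw [h]
    calc ‖∑ j, v j * w j‖ ≤ ∑ j, ‖v j * w j‖ := norm_sum_le _ _
      _ ≤ ∑ _j : Fin d, ‖v‖ * ‖w‖ := by
          apply Finset.sum_le_sum; intro j _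
          rw [norm_mul]
          exact mul_le_mul (norm_le_pi_norm v j) (norm_le_pi_norm w j)
            (norm_nonneg _) (norm_nonneg _)
      _ = d * ‖v‖ * ‖w‖ := by
          simp [Finset.sum_const, Finset.card_univ]; ring

/-- Lemma 4 of the paper: under (C1) and (C2), for every sequence
`ϑ_n ∈ Θ` with `ϑ_n → ϑ` one has `sup_x |G_n(x,ϑ_n) − G(x,ϑ)| → 0`. -/
theorem statement11 {m d : ℕ}
    (Θ : Set (Fin d → ℝ))
    (νG : ℕ → (Fin d → ℝ) → Measure (Fin m → ℝ))
    (hνG : ∀ n θ, IsProbabilityMeasure (νG n θ))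
    (νGl : (Fin d → ℝ) → Measure (Fin m → ℝ)) (hνGl : ∀ θ, IsProbabilityMeasure (νGl θ))
    (hGuc : ∀ θ ∈ Θ, UniformContinuous (cdfm (νGl θ)))
    (hGconv : ∀ θ ∈ Θ, TendstoUniformly (fun n => cdfm (νG n θ)) (cdfm (νGl θ)) atTop)
    (ϑ : Fin d → ℝ) (hϑ : ϑ ∈ Θ)
    (Uθ : Set (Fin d → ℝ))
    (gn : ℕ → (Fin m → ℝ) → (Fin d → ℝ) → Fin d → ℝ)
    (g : (Fin m → ℝ) → (Fin d → ℝ) → Fin d → ℝ)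
    (hC1 : CondC1 νG Uθ ϑ Θ gn) (hC2 : CondC2 Uθ ϑ gn g)
    (θn : ℕ → Fin d → ℝ) (hθnΘ : ∀ n, θn n ∈ Θ) (hθn : Tendsto θn atTop (𝓝 ϑ)) :
    Tendsto (fun n => ⨆ x, |cdfm (νG n (θn n)) x - cdfm (νGl ϑ) x|) atTop (𝓝 0) := by
  obtain ⟨hUopen, hUconv, hϑU, hUΘ, hderiv, hgncont⟩ := hC1
  obtain ⟨hgnconv, hguc, C, hgbound⟩ := hC2
  have hC0 : 0 ≤ C := le_trans (norm_nonneg _) (hgbound 0)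
  obtain ⟨r, hr, hball⟩ := Metric.isOpen_iff.mp hUopen ϑ hϑU
  obtain ⟨δ1, hδ1, hδ1'⟩ := Metric.uniformContinuousOn_iff.mp hguc 1 one_pos
  set ρ := min r δ1 with hρdef
  have hρ : 0 < ρ := lt_min hr hδ1
  set s : Set (Fin d → ℝ) := Metric.ball ϑ ρ with hsdef
  have hsU : s ⊆ Uθ := (Metric.ball_subset_ball (min_le_left _ _)).trans hball
  have hsconv : Convex ℝ s := convex_ball _ _
  have hϑs : ϑ ∈ s := Metric.mem_ball_self hρ
  -- bound on g on s
  have hgb : ∀ x, ∀ θ ∈ s, ‖g x θ‖ ≤ C + 1 := by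
    intro x θ hθs
    have hmem1 : ((x, θ) : (Fin m → ℝ) × (Fin d → ℝ)) ∈ Set.univ ×ˢ Uθ := by
      exact ⟨Set.mem_univ _, hsU hθs⟩
    have hmem2 : ((x, ϑ) : (Fin m → ℝ) × (Fin d → ℝ)) ∈ Set.univ ×ˢ Uθ := by
      exact ⟨Set.mem_univ _, hϑU⟩
    have hdist : dist ((x, θ) : (Fin m → ℝ) × (Fin d → ℝ)) (x, ϑ) < δ1 := by
      rw [Prod.dist_eq]
      simp only [dist_self]
      have : dist θ ϑ < ρ := hθs
      exact max_lt (by linarith [lt_of_lt_of_le this (min_le_right r δ1)])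
        (lt_of_lt_of_le this (min_le_right r δ1))
    have := hδ1' _ hmem1 _ hmem2 hdist
    have h2 : ‖g x θ - g x ϑ‖ < 1 := by rwa [← dist_eq_norm]
    calc ‖g x θ‖ ≤ ‖g x θ - g x ϑ‖ + ‖g x ϑ‖ := by
          simpa using norm_add_le (g x θ - g x ϑ) (g x ϑ)
      _ ≤ 1 + C := by have := hgbound x; linarith
      _ = C + 1 := by ring
  set C2 := (d : ℝ) * (C + 2) with hC2def
  have hC2 : 0 ≤ C2 := by positivity
  rw [NormedAddCommGroup.tendsto_nhds_zero]
  intro ε hε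
  have hgn1 : ∀ᶠ n in atTop, ∀ p ∈ Set.univ ×ˢ Uθ,
      dist (g p.1 p.2) (gn n p.1 p.2) < 1 :=
    Metric.tendstoUniformlyOn_iff.mp hgnconv 1 one_pos
  have hG : ∀ᶠ n in atTop, ∀ x, dist (cdfm (νGl ϑ) x) (cdfm (νG n ϑ) x) < ε / 2 :=
    Metric.tendstoUniformly_iff.mp (hGconv ϑ hϑ) (ε / 2) (by linarith)
  have hθ1 : ∀ᶠ n in atTop, θn n ∈ s := hθn (Metric.ball_mem_nhds ϑ hρ)
  have hθ2 : ∀ᶠ n in atTop, dist (θn n) ϑ < ε / (4 * (C2 + 1)) := by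
    have : Metric.ball ϑ (ε / (4 * (C2 + 1))) ∈ 𝓝 ϑ :=
      Metric.ball_mem_nhds ϑ (by positivity)
    exact hθn this
  filter_upwards [hgn1, hG, hθ1, hθ2] with n h1 h2 h3 h4
  have key : ∀ x, |cdfm (νG n (θn n)) x - cdfm (νGl ϑ) x| ≤ 3 * ε / 4 := by
    intro x
    -- MVT bound on s
    have hbound : ∀ θ ∈ s, ‖projCLM (gn n x θ)‖ ≤ C2 := by
      intro θ hθs
      have hgn : ‖gn n x θ‖ ≤ C + 2 := by
        have hd := h1 (x, θ) ⟨Set.mem_univ _, hsU hθs⟩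
        rw [dist_eq_norm] at hd
        have : ‖gn n x θ‖ ≤ ‖g x θ - gn n x θ‖ + ‖g x θ‖ := by
          calc ‖gn n x θ‖ ≤ ‖gn n x θ - g x θ‖ + ‖g x θ‖ := by
                simpa using norm_add_le (gn n x θ - g x θ) (g x θ)
            _ = ‖g x θ - gn n x θ‖ + ‖g x θ‖ := by rw [norm_sub_rev]
        have := hgb x θ hθs
        linarith [h1 (x, θ) ⟨Set.mem_univ _, hsU hθs⟩, hgb x θ hθs]
      calc ‖projCLM (gn n x θ)‖ ≤ d * ‖gn n x θ‖ := projCLM_norm_le _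
        _ ≤ d * (C + 2) := by
            apply mul_le_mul_of_nonneg_left hgn (by positivity)
    have hmvt : ‖cdfm (νG n (θn n)) x - cdfm (νG n ϑ) x‖ ≤ C2 * ‖θn n - ϑ‖ := by
      apply hsconv.norm_image_sub_le_of_norm_hasFDerivWithin_le
        (f' := fun θ => projCLM (gn n x θ))
        (fun θ hθs => (hderiv n x θ (hsU hθs)).hasFDerivWithinAt)
        hbound hϑs h3
    have hterm1 : |cdfm (νG n (θn n)) x - cdfm (νG n ϑ) x| ≤ ε / 4 := by
      have h5 : C2 * ‖θn n - ϑ‖ ≤ (C2 + 1) * dist (θn n) ϑ := by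
        rw [dist_eq_norm]
        exact mul_le_mul_of_nonneg_right (by linarith) (norm_nonneg _)
      have h6 : (C2 + 1) * dist (θn n) ϑ < (C2 + 1) * (ε / (4 * (C2 + 1))) :=
        mul_lt_mul_of_pos_left h4 (by linarith)
      have h7 : (C2 + 1) * (ε / (4 * (C2 + 1))) = ε / 4 := by
        field_simp
      rw [← Real.norm_eq_abs]
      linarith [hmvt]
    have hterm2 : |cdfm (νG n ϑ) x - cdfm (νGl ϑ) x| < ε / 2 := by
      have := h2 x
      rw [Real.dist_eq, abs_sub_comm] at this
      exact this
    calc |cdfm (νG n (θn n)) x - cdfm (νGl ϑ) x|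
        ≤ |cdfm (νG n (θn n)) x - cdfm (νG n ϑ) x|
          + |cdfm (νG n ϑ) x - cdfm (νGl ϑ) x| := abs_sub_le _ _ _
      _ ≤ 3 * ε / 4 := by linarith
  have hnonneg : 0 ≤ ⨆ x, |cdfm (νG n (θn n)) x - cdfm (νGl ϑ) x| :=
    Real.iSup_nonneg fun x => abs_nonneg _
  have hsup : (⨆ x, |cdfm (νG n (θn n)) x - cdfm (νGl ϑ) x|) ≤ 3 * ε / 4 :=
    Real.iSup_le key (by linarith)
  rw [Real.norm_eq_abs, abs_of_nonneg hnonneg]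
  linarith
end
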